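/- arXiv:2605.21451 — 6 statements merged into one kernel-verified Lean document; each statement's English description precedes it below -/
import Mathlib

section
/- Let μ be a finite signed Borel measure on ℝ^d such that μ(H) = 0 for every open half-space H = {x : wᵀx + b > 0} and every closed half-space {x : wᵀx + b ≥ 0}, for all w ∈ ℝ^d and b ∈ ℝ. Then μ = 0. -/
/-!
Split `μ` into its Jordan parts `μ⁺ - μ⁻`. Every closed half-space `{a ≤ L x}` has the same
`μ⁺`- and `μ⁻`-measure, so the image measures under each continuous linear functional `L`
agree on all rays `[a, ∞)` and hence coincide. Thus `μ⁺` and `μ⁻` have the same characteristic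
function (Cramér–Wold), so `μ⁺ = μ⁻` and `μ = 0`.
-/

open MeasureTheory

namespace MeasureTheory

variable {E : Type*} [NormedAddCommGroup E] [NormedSpace ℝ E] [CompleteSpace E]
  [SecondCountableTopology E] [MeasurableSpace E] [BorelSpace E]

theorem Measure.ext_of_forall_map_strongDual_eq {μ ν : Measure E} [IsFiniteMeasure μ]
    [IsFiniteMeasure ν] (h : ∀ L : StrongDual ℝ E, μ.map L = ν.map L) : μ = ν :=
  Measure.ext_of_charFunDual <| funext fun L ↦ by
    rw [charFunDual_eq_charFun_map_one, charFunDual_eq_charFun_map_one, h]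

theorem Measure.ext_of_forall_halfspace_eq {μ ν : Measure E} [IsFiniteMeasure μ]
    [IsFiniteMeasure ν] (h : ∀ (L : StrongDual ℝ E) (a : ℝ), μ {x | a ≤ L x} = ν {x | a ≤ L x}) :
    μ = ν :=
  Measure.ext_of_forall_map_strongDual_eq fun L ↦ Measure.ext_of_Ici _ _ fun a ↦ by
    rw [Measure.map_apply L.measurable measurableSet_Ici,
      Measure.map_apply L.measurable measurableSet_Ici]
    exact h L a

theorem SignedMeasure.eq_zero_of_forall_halfspace_eq_zero {μ : SignedMeasure E}
    (h : ∀ (L : StrongDual ℝ E) (a : ℝ), μ {x | a ≤ L x} = 0) : μ = 0 := by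
  set j := μ.toJordanDecomposition
  have hμ : ∀ s, MeasurableSet s → μ s = j.posPart.real s - j.negPart.real s := by
    intro s hs
    rw [← μ.toSignedMeasure_toJordanDecomposition, JordanDecomposition.toSignedMeasure,
      Measure.toSignedMeasure_sub_apply hs]
  have hparts : j.posPart = j.negPart := by
    refine Measure.ext_of_forall_halfspace_eq fun L a ↦ ?_
    have hs : MeasurableSet {x | a ≤ L x} := measurableSet_le measurable_const L.measurable
    have := h L a
    rwa [hμ _ hs, sub_eq_zero, measureReal_eq_measureReal_iff] at this
  ext s hs
  rw [hμ s hs, hparts, sub_self, zero_apply]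

end MeasureTheory

theorem StrongDual.apply_eq_sum_apply_single_mul {ι : Type*} [Fintype ι] [DecidableEq ι]
    (L : StrongDual ℝ (ι → ℝ)) (x : ι → ℝ) : L x = ∑ i, L (Pi.single i 1) * x i := by
  conv_lhs => rw [← Finset.univ_sum_single x, map_sum]
  refine Finset.sum_congr rfl fun i _ ↦ ?_
  rw [mul_comm, ← smul_eq_mul, ← map_smul, ← Pi.single_smul', smul_eq_mul, mul_one]

theorem signedMeasure_zero_of_vanishing_on_halfspaces_general
    (d : ℕ) (μ : MeasureTheory.SignedMeasure (Fin d → ℝ))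
    (hclosed : ∀ (w : Fin d → ℝ) (b : ℝ), μ {x | 0 ≤ (∑ i, w i * x i) + b} = 0) :
    μ = 0 := by
  refine SignedMeasure.eq_zero_of_forall_halfspace_eq_zero fun L a ↦ ?_
  convert hclosed (fun i ↦ L (Pi.single i 1)) (-a) using 2
  ext x
  rw [Set.mem_ofPred_eq, Set.mem_ofPred_eq, ← StrongDual.apply_eq_sum_apply_single_mul]
  exact ⟨fun h ↦ by linarith, fun h ↦ by linarith⟩

/-- A finite signed Borel measure vanishing on all open and closed
half-spaces is the zero measure. -/
theorem signedMeasure_zero_of_vanishing_on_halfspaces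
    (d : ℕ) (μ : MeasureTheory.SignedMeasure (Fin d → ℝ))
    (hopen : ∀ (w : Fin d → ℝ) (b : ℝ), μ {x | 0 < (∑ i, w i * x i) + b} = 0)
    (hclosed : ∀ (w : Fin d → ℝ) (b : ℝ), μ {x | 0 ≤ (∑ i, w i * x i) + b} = 0) :
    μ = 0 :=
  signedMeasure_zero_of_vanishing_on_halfspaces_general d μ hclosed
end

section
/- Let σ : ℝ → ℝ be a continuous sigmoidal function. Then the linear span of the functions x ↦ σ(wᵀx + b), for w ∈ ℝ^d and b ∈ ℝ, is dense in C([0,1]^d) with respect to the uniform norm. -/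
/-!
Cosine ridges `x ↦ cos (ℓ x + b)`, with `ℓ` ranging over a vector space of functions that
separates points (on the cube: the linear forms `x ↦ ∑ i, w i * x i`), span a subalgebra
(product-to-sum formula) that separates points, hence a dense one by Stone–Weierstrass. Each
cosine ridge is a continuous function of one variable composed with `ℓ`, so it suffices to
approximate continuous functions on compact intervals of `ℝ` by combinations of
`t ↦ σ (w * t + b)`. There, a continuous `g` is close to a staircase with small steps, which is a
sum of Heaviside jumps; replacing each jump by a steep sigmoid `σ (K * (t - c))` only costs
something for the two jumps next to `t`, and these are small.
-/

open Filter Topology Set Finset Submodule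

lemma abs_sum_mul_le_of_forall_ne {ι : Type*} [DecidableEq ι] (s : Finset ι) (a b : ι → ℝ)
    (i₁ i₂ : ι) {ε η C : ℝ} (hε : 0 ≤ ε) (hη : 0 ≤ η) (hC : 0 ≤ C) (ha : ∀ i ∈ s, |a i| ≤ ε)
    (hb : ∀ i ∈ s, |b i| ≤ C) (hbη : ∀ i ∈ s, i ≠ i₁ → i ≠ i₂ → |b i| ≤ η) :
    |∑ i ∈ s, a i * b i| ≤ #s * (ε * η) + 2 * (ε * C) := by
  have hterm : ∀ i ∈ s, |a i * b i| ≤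
      ε * η + ((if i = i₁ then ε * C else 0) + if i = i₂ then ε * C else 0) := by
    intro i hi
    rw [abs_mul]
    by_cases h : i = i₁ ∨ i = i₂
    · have hexc : ε * C ≤ (if i = i₁ then ε * C else 0) + if i = i₂ then ε * C else 0 := by
        rcases h with rfl | rfl <;> rw [if_pos rfl] <;> split_ifs <;> nlinarith
      nlinarith [mul_le_mul (ha i hi) (hb i hi) (abs_nonneg _) hε, mul_nonneg hε hη]
    · push Not at h
      rw [if_neg h.1, if_neg h.2]
      nlinarith [mul_le_mul (ha i hi) (hbη i hi h.1 h.2) (abs_nonneg _) hε]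
  calc |∑ i ∈ s, a i * b i| ≤ ∑ i ∈ s, |a i * b i| := abs_sum_le_sum_abs _ _
    _ ≤ _ := Finset.sum_le_sum hterm
    _ ≤ #s * (ε * η) + 2 * (ε * C) := by
      rw [Finset.sum_add_distrib, Finset.sum_add_distrib, Finset.sum_ite_eq', Finset.sum_ite_eq',
        Finset.sum_const, nsmul_eq_mul]
      split_ifs <;> nlinarith

lemma sum_range_sub_mul_ite_lt (f : ℕ → ℝ) {m n : ℕ} (hmn : m ≤ n) :
    ∑ j ∈ range n, (f (j + 1) - f j) * (if j < m then 1 else 0) = f m - f 0 := by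
  simp only [mul_ite, mul_one, mul_zero]
  rw [← Finset.sum_filter, range_eq_Ico, Ico_filter_lt, min_eq_right hmn, ← range_eq_Ico,
    sum_range_sub]

section Sigmoid

variable {σ : ℝ → ℝ}

lemma exists_forall_abs_le_of_tendsto_atBot_atTop (hσ : Continuous σ) {c₀ c₁ : ℝ}
    (h0 : Tendsto σ atBot (𝓝 c₀)) (h1 : Tendsto σ atTop (𝓝 c₁)) :
    ∃ B, ∀ t, |σ t| ≤ B := by
  obtain ⟨B, hB⟩ := isBounded_iff_forall_norm_le.1 <|
    hσ.isBounded_range_iff_isBigO_atTop_atBot.2 ⟨h1.isBigO_one ℝ, h0.isBigO_one ℝ⟩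
  exact ⟨B, fun t => hB _ (mem_range_self t)⟩

lemma eventually_abs_sub_one_lt_and_abs_neg_lt (h0 : Tendsto σ atBot (𝓝 0))
    (h1 : Tendsto σ atTop (𝓝 1)) {η : ℝ} (hη : 0 < η) :
    ∀ᶠ s in atTop, |σ s - 1| < η ∧ |σ (-s)| < η := by
  have h0' := (h0.comp tendsto_neg_atTop_atBot).eventually (Metric.ball_mem_nhds _ hη)
  filter_upwards [h1.eventually (Metric.ball_mem_nhds _ hη), h0'] with s hs hs'
  simpa [Real.dist_eq] using And.intro hs hs'

lemma abs_ite_lt_sub_sigmoid_le {K η x : ℝ} {j m : ℕ}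
    (hK : ∀ s ≥ K, |σ s - 1| < η ∧ |σ (-s)| < η) (hK0 : 0 ≤ K)
    (hmx : (m : ℝ) ≤ x) (hxm : x < m + 1) (hj : j ≠ m) (hj' : j + 1 ≠ m) :
    |(if j < m then 1 else 0) - σ (K * (x - (j + 1)))| ≤ η := by
  split_ifs with hjm
  · have hjm' : (j : ℝ) + 2 ≤ m := by exact_mod_cast (show j + 2 ≤ m by omega)
    have hs : K ≤ K * (x - (j + 1)) := le_mul_of_one_le_right hK0 (by linarith)
    rw [abs_sub_comm]
    exact (hK _ hs).1.le
  · have hjm' : (m : ℝ) + 1 ≤ j := by exact_mod_cast (show m + 1 ≤ j by omega)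
    have hs : K ≤ -(K * (x - (j + 1))) := by
      rw [← mul_neg]; exact le_mul_of_one_le_right hK0 (by linarith)
    simpa using (hK _ hs).2.le

/- With `x = (t - a) / h`, the sum is the staircase
`g a + ∑_{j < ⌊x⌋} (g (a + (j + 1) h) - g (a + j h))` with the Heaviside factor of the `j`-th jump
replaced by `σ (K * (x - (j + 1)))`. The error terms: `g` against the staircase, the constant
term, and the jumps, of which all but the two next to `x` see `σ` within `η` of the Heaviside
function. -/
lemma abs_sub_sigmoid_staircase_le {B K η : ℝ} (hB : ∀ t, |σ t| ≤ B)
    (hK : ∀ s ≥ K, |σ s - 1| < η ∧ |σ (-s)| < η) (hK0 : 0 ≤ K) (hη : 0 ≤ η)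
    {g : ℝ → ℝ} {h ε : ℝ} (hh : 0 < h) (hε : 0 ≤ ε) (hg : ∀ s t, |s - t| ≤ h → |g s - g t| ≤ ε)
    {a t : ℝ} {n : ℕ} (ht : t ∈ Icc a (a + n * h)) :
    |g t - (g a * σ K + ∑ j ∈ range n,
      (g (a + ↑(j + 1) * h) - g (a + j * h)) * σ (K * ((t - a) / h - (j + 1))))| ≤
      ε + |g a| * η + (n * (ε * η) + 2 * (ε * (1 + B))) := by
  set f : ℕ → ℝ := fun j => g (a + j * h)
  set x := (t - a) / h with hx
  set m := ⌊x⌋₊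
  have hx0 : 0 ≤ x := div_nonneg (by linarith [ht.1]) hh.le
  have hmx : (m : ℝ) ≤ x := Nat.floor_le hx0
  have hxm : x < m + 1 := Nat.lt_floor_add_one x
  have hmn : m ≤ n := Nat.floor_le_of_le <| (div_le_iff₀ hh).2 (by linarith [ht.2])
  have hdecomp : g t - (g a * σ K + ∑ j ∈ range n, (f (j + 1) - f j) * σ (K * (x - (j + 1)))) =
      (g t - f m) + g a * (1 - σ K) +
        ∑ j ∈ range n, (f (j + 1) - f j) * ((if j < m then 1 else 0) - σ (K * (x - (j + 1)))) := by
    simp only [mul_sub, Finset.sum_sub_distrib, sum_range_sub_mul_ite_lt f hmn]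
    simp only [f, Nat.cast_add, Nat.cast_one, CharP.cast_eq_zero, zero_mul, add_zero]
    ring
  have hstair : |g t - f m| ≤ ε := by
    refine hg _ _ ?_
    have : t - (a + m * h) = (x - m) * h := by rw [hx]; field_simp; ring
    rw [this, abs_of_nonneg (mul_nonneg (by linarith) hh.le)]
    nlinarith
  have hconst : |g a * (1 - σ K)| ≤ |g a| * η := by
    rw [abs_mul, abs_sub_comm]
    exact mul_le_mul_of_nonneg_left (hK K le_rfl).1.le (abs_nonneg _)
  have hjumps := abs_sum_mul_le_of_forall_ne (range n)
    (fun j => f (j + 1) - f j) (fun j => (if j < m then 1 else 0) - σ (K * (x - (j + 1))))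
    (m - 1) m hε hη (C := 1 + B) (by linarith [(abs_nonneg _).trans (hB 0)])
    (fun j _ => hg _ _ (by push_cast; rw [abs_of_nonneg (by nlinarith)]; nlinarith))
    (fun j _ => (abs_sub _ _).trans (add_le_add (by split_ifs <;> simp) (hB _)))
    (fun j _ hj₁ hj₂ => abs_ite_lt_sub_sigmoid_le hK hK0 hmx hxm hj₂ (by omega))
  rw [card_range] at hjumps
  rw [hdecomp]
  exact (abs_add_three _ _ _).trans (by gcongr)

end Sigmoid

section Ridge

variable {X : Type*} [TopologicalSpace X]

def ridge (φ : C(ℝ, ℝ)) (ℓ : C(X, ℝ)) (b : ℝ) : C(X, ℝ) :=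
  φ.comp (ℓ + ContinuousMap.const X b)

@[simp]
lemma ridge_apply (φ : C(ℝ, ℝ)) (ℓ : C(X, ℝ)) (b : ℝ) (x : X) : ridge φ ℓ b x = φ (ℓ x + b) :=
  rfl

def ridges (φ : C(ℝ, ℝ)) (L : Submodule ℝ C(X, ℝ)) : Set C(X, ℝ) :=
  {F | ∃ ℓ ∈ L, ∃ b, ridge φ ℓ b = F}

lemma ridge_mem_ridges {φ : C(ℝ, ℝ)} {L : Submodule ℝ C(X, ℝ)} {ℓ : C(X, ℝ)} (hℓ : ℓ ∈ L)
    (b : ℝ) : ridge φ ℓ b ∈ ridges φ L :=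
  ⟨ℓ, hℓ, b, rfl⟩

end Ridge

lemma exists_mem_span_ridges_abs_sub_le_of_oscillation (σ : C(ℝ, ℝ))
    (h0 : Tendsto σ atBot (𝓝 0)) (h1 : Tendsto σ atTop (𝓝 1)) {B : ℝ} (hB : ∀ t, |σ t| ≤ B)
    {g : ℝ → ℝ} {h ε : ℝ} (hh : 0 < h) (hε : 0 < ε)
    (hg : ∀ s t, |s - t| ≤ h → |g s - g t| ≤ ε) (a : ℝ) (n : ℕ) :
    ∃ φ ∈ span ℝ (ridges σ (ℝ ∙ ContinuousMap.id ℝ)),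
      ∀ t ∈ Icc a (a + n * h), |g t - φ t| ≤ (4 + 2 * B) * ε := by
  set η := ε / (|g a| + n * ε + 1) with hηdef
  have hη : 0 < η := by positivity
  have hηε : (|g a| + n * ε) * η ≤ ε := by
    rw [hηdef, mul_div_assoc']
    exact div_le_of_le_mul₀ (by positivity) hε.le (by nlinarith)
  obtain ⟨K, hK⟩ := eventually_atTop.1 <|
    (eventually_abs_sub_one_lt_and_abs_neg_lt h0 h1 hη).and (eventually_ge_atTop 0)
  let step (j : ℕ) : C(ℝ, ℝ) := ridge σ ((K / h) • ContinuousMap.id ℝ) (-(K * (a / h + (j + 1))))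
  let φ : C(ℝ, ℝ) :=
    g a • ridge σ 0 K + ∑ j ∈ range n, (g (a + ↑(j + 1) * h) - g (a + j * h)) • step j
  refine ⟨φ, ?_, fun t ht => ?_⟩
  · refine add_mem (smul_mem _ _ (subset_span ?_))
      (sum_mem fun j _ => smul_mem _ _ (subset_span ?_))
    · exact ridge_mem_ridges (zero_mem _) K
    · exact ridge_mem_ridges (smul_mem _ _ (mem_span_singleton_self _)) _
  have hφt : φ t = g a * σ K + ∑ j ∈ range n,
      (g (a + ↑(j + 1) * h) - g (a + j * h)) * σ (K * ((t - a) / h - (j + 1))) := by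
    simp only [φ, step, ContinuousMap.add_apply, ContinuousMap.smul_apply, ContinuousMap.coe_sum,
      Finset.sum_apply, ridge_apply, ContinuousMap.id_apply, ContinuousMap.zero_apply, smul_eq_mul,
      zero_add]
    congr 1
    refine sum_congr rfl fun j _ => congrArg _ (congrArg σ ?_)
    field_simp
    ring
  rw [hφt]
  refine (abs_sub_sigmoid_staircase_le hB (fun s hs => (hK s hs).1) (hK K le_rfl).2 hη.le hh
    hε.le hg ht).trans ?_
  nlinarith

lemma exists_mem_span_ridges_abs_sub_le (σ : C(ℝ, ℝ)) (h0 : Tendsto σ atBot (𝓝 0))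
    (h1 : Tendsto σ atTop (𝓝 1)) (g : C(ℝ, ℝ)) (a b : ℝ) {ε : ℝ} (hε : 0 < ε) :
    ∃ φ ∈ span ℝ (ridges σ (ℝ ∙ ContinuousMap.id ℝ)), ∀ t ∈ Icc a b, |g t - φ t| ≤ ε := by
  rcases lt_or_ge b a with hba | hab
  · exact ⟨0, zero_mem _, fun t ht => absurd (ht.1.trans ht.2) hba.not_ge⟩
  obtain ⟨B, hB⟩ := exists_forall_abs_le_of_tendsto_atBot_atTop σ.continuous h0 h1
  have hB0 : 0 ≤ B := (abs_nonneg _).trans (hB 0)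
  set G := IccExtend hab (g.restrict (Icc a b))
  have hG : UniformContinuous G :=
    (CompactSpace.uniformContinuous_of_continuous (g.restrict (Icc a b)).continuous).comp
      (LipschitzWith.projIcc hab).uniformContinuous
  have hε' : 0 < ε / (4 + 2 * B) := by positivity
  obtain ⟨δ, hδ, hGδ⟩ := Metric.uniformContinuous_iff_le.1 hG _ hε'
  obtain ⟨φ, hφ, hφG⟩ := exists_mem_span_ridges_abs_sub_le_of_oscillation σ h0 h1 hB hδ hε'
    (fun s t hst => by simpa only [Real.dist_eq] using hGδ (by rwa [Real.dist_eq])) a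
    ⌈(b - a) / δ⌉₊
  refine ⟨φ, hφ, fun t ht => ?_⟩
  have htn : t ≤ a + ⌈(b - a) / δ⌉₊ * δ := by
    have := (div_le_iff₀ hδ).1 (Nat.le_ceil ((b - a) / δ))
    linarith [ht.2]
  have hGt : G t = g t := IccExtend_of_mem hab _ ht
  simpa only [hGt, mul_div_cancel₀ _ (by positivity : 4 + 2 * B ≠ 0)] using hφG t ⟨ht.1, htn⟩

theorem dense_span_ridges_id (σ : C(ℝ, ℝ)) (h0 : Tendsto σ atBot (𝓝 0))
    (h1 : Tendsto σ atTop (𝓝 1)) :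
    Dense (span ℝ (ridges σ (ℝ ∙ ContinuousMap.id ℝ)) : Set C(ℝ, ℝ)) := by
  intro g
  rw [mem_closure_iff_nhds_basis <|
    nhds_basis_uniformity' Metric.uniformity_basis_dist_le.compactConvergenceUniformity]
  rintro ⟨K, ε⟩ ⟨hK, hε⟩
  obtain ⟨a, ha⟩ := hK.bddBelow
  obtain ⟨b, hb⟩ := hK.bddAbove
  obtain ⟨φ, hφ, hφg⟩ := exists_mem_span_ridges_abs_sub_le σ h0 h1 g a b hε
  exact ⟨φ, hφ, fun t ht => (Real.dist_eq _ _).trans_le (hφg t ⟨ha ht, hb ht⟩)⟩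

section RidgeDensity

variable {X : Type*} [TopologicalSpace X]

lemma ridge_mem_closure_span_ridges (σ : C(ℝ, ℝ)) (h0 : Tendsto σ atBot (𝓝 0))
    (h1 : Tendsto σ atTop (𝓝 1)) {L : Submodule ℝ C(X, ℝ)} (φ : C(ℝ, ℝ)) {ℓ : C(X, ℝ)}
    (hℓ : ℓ ∈ L) (b : ℝ) : ridge φ ℓ b ∈ closure (span ℝ (ridges σ L) : Set C(X, ℝ)) := by
  let Φ := (ContinuousMap.compRightAlgHom ℝ ℝ ℓ).toLinearMap
  have hΦ : Φ '' span ℝ (ridges σ (ℝ ∙ ContinuousMap.id ℝ)) ⊆ span ℝ (ridges σ L) := by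
    rw [← Submodule.map_coe, Submodule.map_span]
    refine span_mono ?_
    rintro _ ⟨_, ⟨_, hc, b, rfl⟩, rfl⟩
    obtain ⟨c, rfl⟩ := mem_span_singleton.1 hc
    refine ⟨c • ℓ, L.smul_mem c hℓ, b, ContinuousMap.ext fun x => ?_⟩
    simp [Φ]
  have hφ : ridge φ ℓ b = Φ (ridge φ (ContinuousMap.id ℝ) b) := rfl
  rw [hφ]
  refine closure_mono hΦ (image_closure_subset_closure_image
    (ContinuousMap.compRightAlgHom_continuous ℝ ℝ ℓ) ⟨_, ?_, rfl⟩)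
  exact (dense_span_ridges_id σ h0 h1).closure_eq ▸ mem_univ _

local notation "cos" => ContinuousMap.mk Real.cos Real.continuous_cos

lemma ridge_cos_mul_ridge_cos (ℓ₁ ℓ₂ : C(X, ℝ)) (b₁ b₂ : ℝ) :
    ridge cos ℓ₁ b₁ * ridge cos ℓ₂ b₂ =
      (2⁻¹ : ℝ) • (ridge cos (ℓ₁ + ℓ₂) (b₁ + b₂) + ridge cos (ℓ₁ - ℓ₂) (b₁ - b₂)) := by
  ext x
  simp only [ContinuousMap.mul_apply, ContinuousMap.smul_apply, ContinuousMap.add_apply,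
    ContinuousMap.sub_apply, ridge_apply, ContinuousMap.coe_mk, smul_eq_mul]
  rw [show ℓ₁ x + ℓ₂ x + (b₁ + b₂) = (ℓ₁ x + b₁) + (ℓ₂ x + b₂) by ring,
    show ℓ₁ x - ℓ₂ x + (b₁ - b₂) = (ℓ₁ x + b₁) - (ℓ₂ x + b₂) by ring,
    Real.cos_add (ℓ₁ x + b₁), Real.cos_sub (ℓ₁ x + b₁)]
  ring

lemma mul_mem_span_ridges_cos {L : Submodule ℝ C(X, ℝ)} {F G : C(X, ℝ)}
    (hF : F ∈ span ℝ (ridges cos L)) (hG : G ∈ span ℝ (ridges cos L)) :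
    F * G ∈ span ℝ (ridges cos L) := by
  have hFG := Submodule.mul_mem_mul hF hG
  rw [span_mul_span] at hFG
  refine span_le.2 ?_ hFG
  rintro _ ⟨_, ⟨ℓ₁, hℓ₁, b₁, rfl⟩, _, ⟨ℓ₂, hℓ₂, b₂, rfl⟩, rfl⟩
  dsimp only
  rw [ridge_cos_mul_ridge_cos]
  exact smul_mem _ _ (add_mem (subset_span (ridge_mem_ridges (L.add_mem hℓ₁ hℓ₂) _))
    (subset_span (ridge_mem_ridges (L.sub_mem hℓ₁ hℓ₂) _)))

def cosRidgeSubalgebra (L : Submodule ℝ C(X, ℝ)) : Subalgebra ℝ C(X, ℝ) :=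
  (span ℝ (ridges cos L)).toSubalgebra
    (subset_span ⟨0, L.zero_mem, 0, ContinuousMap.ext fun x => by simp⟩)
    (fun _ _ => mul_mem_span_ridges_cos)

lemma separatesPoints_cosRidgeSubalgebra {L : Submodule ℝ C(X, ℝ)}
    (hL : ∀ x y, x ≠ y → ∃ ℓ ∈ L, ℓ x ≠ ℓ y) : (cosRidgeSubalgebra L).SeparatesPoints := by
  intro x y hxy
  obtain ⟨ℓ, hℓ, hℓxy⟩ := hL x y hxy
  set c := Real.pi / (ℓ x - ℓ y)
  refine ⟨_, ⟨ridge cos (c • ℓ) (-(c * ℓ y)), subset_span (ridge_mem_ridges (L.smul_mem c hℓ) _),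
    rfl⟩, ?_⟩
  have hc : c * ℓ x + -(c * ℓ y) = Real.pi := by
    simp only [c]; field_simp [sub_ne_zero.2 hℓxy]; ring
  change Real.cos (c * ℓ x + -(c * ℓ y)) ≠ Real.cos (c * ℓ y + -(c * ℓ y))
  rw [hc, add_neg_cancel, Real.cos_pi, Real.cos_zero]
  norm_num

theorem dense_span_ridges [CompactSpace X] (σ : C(ℝ, ℝ))
    (h0 : Tendsto σ atBot (𝓝 0)) (h1 : Tendsto σ atTop (𝓝 1)) {L : Submodule ℝ C(X, ℝ)}
    (hL : ∀ x y, x ≠ y → ∃ ℓ ∈ L, ℓ x ≠ ℓ y) :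
    Dense (span ℝ (ridges σ L) : Set C(X, ℝ)) := by
  have hcos : (cosRidgeSubalgebra L : Set C(X, ℝ)) ⊆ closure (span ℝ (ridges σ L)) := by
    rw [← Submodule.topologicalClosure_coe]
    exact span_le.2 fun _ ⟨ℓ, hℓ, b, hF⟩ => hF ▸ ridge_mem_closure_span_ridges σ h0 h1 _ hℓ b
  have hdense : closure (cosRidgeSubalgebra L : Set C(X, ℝ)) = univ := by
    rw [← Subalgebra.topologicalClosure_coe,
      ContinuousMap.subalgebra_topologicalClosure_eq_top_of_separatesPoints _
        (separatesPoints_cosRidgeSubalgebra hL), Algebra.coe_top]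
  exact dense_iff_closure_eq.2 <| eq_univ_of_univ_subset <|
    hdense ▸ closure_minimal hcos isClosed_closure

end RidgeDensity

/-- Cybenko: the span of sigmoidal ridge functions is dense in
`C([0,1]^d)` (with the uniform topology, which is the topology of `C(K, ℝ)`
for `K` compact). -/
theorem cybenko_density
    (d : ℕ) (σ : ℝ → ℝ) (hσcont : Continuous σ)
    (h0 : Tendsto σ atBot (nhds 0)) (h1 : Tendsto σ atTop (nhds 1)) :
    Dense ((Submodule.span ℝ
        {F : C(Set.Icc (0 : Fin d → ℝ) 1, ℝ) |
          ∃ (w : Fin d → ℝ) (b : ℝ),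
            ∀ x : Set.Icc (0 : Fin d → ℝ) 1,
              F x = σ ((∑ i, w i * (x : Fin d → ℝ) i) + b)} :
        Submodule ℝ C(Set.Icc (0 : Fin d → ℝ) 1, ℝ)) :
      Set C(Set.Icc (0 : Fin d → ℝ) 1, ℝ)) := by
  let coord (i : Fin d) : C(Set.Icc (0 : Fin d → ℝ) 1, ℝ) :=
    ⟨fun x => (x : Fin d → ℝ) i, (continuous_apply i).comp continuous_subtype_val⟩
  have hsep : ∀ x y, x ≠ y → ∃ ℓ ∈ span ℝ (range coord), ℓ x ≠ ℓ y := fun x y hxy => by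
    obtain ⟨i, hi⟩ := Function.ne_iff.1 (Subtype.coe_ne_coe.2 hxy)
    exact ⟨coord i, subset_span (mem_range_self i), hi⟩
  refine (dense_span_ridges ⟨σ, hσcont⟩ h0 h1 hsep).mono (span_mono ?_)
  rintro _ ⟨ℓ, hℓ, b, rfl⟩
  obtain ⟨w, rfl⟩ := (mem_span_range_iff_exists_fun ℝ).1 hℓ
  exact ⟨w, b, fun x => by simp [coord]⟩
end

section
/- Let σ : ℝ → ℝ be a polynomial. Then the set of functions of the form x ↦ Σ_{j=1}^m a_j σ(w_jᵀ x + b_j), with m ∈ ℕ, a_j, b_j ∈ ℝ, w_j ∈ ℝ^d, is not dense in C([0,1]^d) with respect to the uniform norm (for any d ≥ 1). -/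
/-!
Along the diagonal `t ↦ (t, …, t)` of the cube, every network with activation `P` restricts to a
univariate polynomial of degree at most `deg P`. Restriction to the diagonal is a continuous
surjection `C([0,1]^d) → C([0,1])`, so density of the networks would make the finite-dimensional,
hence closed, space of polynomials of degree `≤ deg P` dense in `C([0,1])`, i.e. all of it;
but it does not contain `t ^ (deg P + 1)`.
-/

open Polynomial Set

section PolynomialFunctions

variable {R : Type*} [CommRing R] [TopologicalSpace R] [IsTopologicalRing R]

noncomputable def polynomialFunctionsDegreeLT (s : Set R) (n : ℕ) : Submodule R C(s, R) :=
  (degreeLT R n).map (toContinuousMapOnAlgHom s).toLinearMap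

theorem toContinuousMapOn_X_pow_notMem_polynomialFunctionsDegreeLT [IsDomain R] {s : Set R}
    (hs : s.Infinite) (n : ℕ) :
    (X ^ n : R[X]).toContinuousMapOn s ∉ polynomialFunctionsDegreeLT s n := by
  rintro ⟨q, hq, hqX⟩
  have hq_eq : q = X ^ n := eq_of_infinite_eval_eq q _ <|
    hs.mono fun x hx => by simpa using congr($hqX ⟨x, hx⟩)
  rw [hq_eq, SetLike.mem_coe, mem_degreeLT, degree_X_pow] at hq
  exact lt_irrefl _ hq

theorem isClosed_polynomialFunctionsDegreeLT {𝕜 : Type*} [NontriviallyNormedField 𝕜]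
    [CompleteSpace 𝕜] (s : Set 𝕜) (n : ℕ) :
    IsClosed (polynomialFunctionsDegreeLT s n : Set C(s, 𝕜)) :=
  haveI : FiniteDimensional 𝕜 (degreeLT 𝕜 n) := .equiv (degreeLTEquiv 𝕜 n).symm
  ((degreeLT 𝕜 n).map (toContinuousMapOnAlgHom s).toLinearMap).closed_of_finiteDimensional

end PolynomialFunctions

theorem comp_C_mul_X_add_C_mem_degreeLT {R : Type*} [CommSemiring R] (P : R[X]) (c b : R) :
    P.comp (C c * X + C b) ∈ degreeLT R (P.natDegree + 1) := by
  have hdeg : (P.comp (C c * X + C b)).natDegree ≤ P.natDegree :=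
    natDegree_comp_le.trans ((Nat.mul_le_mul_left _ natDegree_linear_le).trans (mul_one _).le)
  rw [mem_degreeLT]
  exact degree_le_natDegree.trans_lt (by exact_mod_cast Nat.lt_succ_of_le hdeg)

theorem ContinuousMap.surjective_precomp_of_comp_eq_id {X Y Z : Type*} [TopologicalSpace X]
    [TopologicalSpace Y] [TopologicalSpace Z] {f : C(X, Y)} {g : C(Y, X)} (h : g.comp f = .id X) :
    Function.Surjective fun F : C(Y, Z) => F.comp f :=
  fun G => ⟨G.comp g, by simp only [comp_assoc, h, comp_id]⟩

def diagonalIcc (ι : Type*) : C(Icc (0 : ℝ) 1, Icc (0 : ι → ℝ) 1) :=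
  ⟨fun t => ⟨fun _ => t, fun _ => t.2.1, fun _ => t.2.2⟩, by fun_prop⟩

def evalIcc {ι : Type*} (i : ι) : C(Icc (0 : ι → ℝ) 1, Icc (0 : ℝ) 1) :=
  ⟨fun x => ⟨x.1 i, x.2.1 i, x.2.2 i⟩,
    ((continuous_apply i).comp continuous_subtype_val).subtype_mk _⟩

theorem evalIcc_comp_diagonalIcc {ι : Type*} (i : ι) :
    (evalIcc i).comp (diagonalIcc ι) = .id _ :=
  rfl

theorem comp_diagonalIcc_mem_polynomialFunctionsDegreeLT {ι κ : Type*} [Fintype ι] [Fintype κ]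
    (P : ℝ[X]) (a b : κ → ℝ) (w : κ → ι → ℝ) (F : C(Icc (0 : ι → ℝ) 1, ℝ))
    (hF : ∀ x : Icc (0 : ι → ℝ) 1, F x = ∑ j, a j * P.eval ((∑ i, w j i * (x : ι → ℝ) i) + b j)) :
    F.comp (diagonalIcc ι) ∈ polynomialFunctionsDegreeLT (Icc (0 : ℝ) 1) (P.natDegree + 1) := by
  refine ⟨∑ j, a j • P.comp (C (∑ i, w j i) * X + C (b j)),
    Submodule.sum_mem _ fun j _ => Submodule.smul_mem _ _ (comp_C_mul_X_add_C_mem_degreeLT P _ _),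
    ?_⟩
  ext t
  simp [hF, diagonalIcc, eval_finsetSum, Finset.sum_mul]

/-- one-hidden-layer networks with a polynomial activation are
not dense in `C([0,1]^d)` for any `d ≥ 1`. -/
theorem polynomial_activation_not_dense
    (d : ℕ) (hd : 1 ≤ d) (σ : ℝ → ℝ)
    (hσ : ∃ P : Polynomial ℝ, ∀ t : ℝ, σ t = P.eval t) :
    ¬ Dense
      {F : C(Set.Icc (0 : Fin d → ℝ) 1, ℝ) |
        ∃ (m : ℕ) (a : Fin m → ℝ) (w : Fin m → Fin d → ℝ) (b : Fin m → ℝ),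
          ∀ x : Set.Icc (0 : Fin d → ℝ) 1,
            F x = ∑ j, a j * σ ((∑ i, w j i * (x : Fin d → ℝ) i) + b j)} := by
  obtain ⟨P, rfl⟩ : ∃ P : ℝ[X], σ = fun t => P.eval t :=
    hσ.imp fun P hP => funext hP
  intro hdense
  set V := polynomialFunctionsDegreeLT (Icc (0 : ℝ) 1) (P.natDegree + 1)
  have hrestrict_dense : DenseRange fun F : C(Icc (0 : Fin d → ℝ) 1, ℝ) => F.comp (diagonalIcc _) :=
    (ContinuousMap.surjective_precomp_of_comp_eq_id
      (evalIcc_comp_diagonalIcc (⟨0, hd⟩ : Fin d))).denseRange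
  have hV_dense : Dense (V : Set C(Icc (0 : ℝ) 1, ℝ)) := by
    refine (hrestrict_dense.dense_image (ContinuousMap.continuous_precomp _) hdense).mono ?_
    rintro _ ⟨F, ⟨_, a, w, b, hF⟩, rfl⟩
    exact comp_diagonalIcc_mem_polynomialFunctionsDegreeLT P a b w F hF
  have hV_top : (V : Set C(Icc (0 : ℝ) 1, ℝ)) = univ := by
    rw [← hV_dense.closure_eq, (isClosed_polynomialFunctionsDegreeLT _ _).closure_eq]
  exact toContinuousMapOn_X_pow_notMem_polynomialFunctionsDegreeLT (Icc_infinite zero_lt_one) _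
    (hV_top ▸ mem_univ _)
end

section
/- For each k ≥ 1, the k-fold composition τ^[k] of the tent function restricted to [0,1] is piecewise affine with exactly 2^k affine pieces, and it attains the value 1/2 at exactly 2^k points of [0,1]; consequently the crossing number of τ^[k] (the minimal number of intervals partitioning ℝ on which x ↦ 𝟙(τ^[k](x) ≥ 1/2) is constant) equals 2^k + 1. -/
/-- The tent function. -/
noncomputable def tent (x : ℝ) : ℝ :=
  if x ∈ Set.Icc (0 : ℝ) (1 / 2) then 2 * x
  else if x ∈ Set.Ioc (1 / 2 : ℝ) 1 then 2 * (1 - x)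
  else 0

/-- `f` is piecewise affine on `[0,1]` with (at most) `n` pieces: there is a
subdivision `0 = t 0 < t 1 < ⋯ < t n = 1` such that `f` is affine on each
subinterval. -/
def PiecewiseAffineOnUnit (f : ℝ → ℝ) (n : ℕ) : Prop :=
  ∃ t : Fin (n + 1) → ℝ, StrictMono t ∧ t 0 = 0 ∧ t (Fin.last n) = 1 ∧
    ∀ i : Fin n, ∃ a b : ℝ, ∀ x ∈ Set.Icc (t i.castSucc) (t i.succ), f x = a * x + b

/-- `ℝ` can be partitioned into `n` intervals on each of which `𝟙(f ≥ 1/2)` is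
constant. -/
def CrossingPartition (f : ℝ → ℝ) (n : ℕ) : Prop :=
  ∃ S : Fin n → Set ℝ, (∀ i, (S i).OrdConnected) ∧ (⋃ i, S i) = Set.univ ∧
    (Pairwise (Function.onFun Disjoint S)) ∧
    ∀ i, ∀ x ∈ S i, ∀ y ∈ S i, ((1 : ℝ) / 2 ≤ f x ↔ (1 : ℝ) / 2 ≤ f y)

/-! On the `j`-th dyadic interval `[j / 2^k, (j + 1) / 2^k]` the iterate `τ^[k]` is affine, rising
from `0` to `1` for even `j` and falling from `1` to `0` for odd `j`: by induction on `k`, since the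
outer `τ` does not see the orientation of a piece, `τ (1 - s) = τ s`. This gives `2^k` pieces and
the `2^k` midpoints as the solutions of `τ^[k] = 1/2`; as an affine piece meets a level once or
everywhere, no subdivision into fewer pieces works. The indicator of `τ^[k] ≥ 1/2` is `0` at the
even and `1` at the odd grid points `m / 2^k`, so any partition as in the crossing number separates
all `2^k + 1` of them, and the level sets of the number of midpoints passed achieve this bound. -/

open Set

theorem Fin.exists_mem_Icc_castSucc_succ {X : Type*} [LinearOrder X] {n : ℕ} (hn : n ≠ 0)
    (t : Fin (n + 1) → X) {x : X} (hx : x ∈ Icc (t 0) (t (Fin.last n))) :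
    ∃ i : Fin n, x ∈ Icc (t i.castSucc) (t i.succ) := by
  obtain ⟨n, rfl⟩ := Nat.exists_eq_succ_of_ne_zero hn
  induction n with
  | zero => exact ⟨0, hx⟩
  | succ n ih =>
    by_cases h : x ≤ t (Fin.last (n + 1)).castSucc
    · obtain ⟨i, hi⟩ := ih n.succ_ne_zero (fun i => t i.castSucc) ⟨hx.1, h⟩
      exact ⟨i.castSucc, hi⟩
    · exact ⟨Fin.last (n + 1), (not_le.1 h).le, hx.2⟩

theorem PiecewiseAffineOnUnit.ncard_le {f : ℝ → ℝ} {n : ℕ} (hf : PiecewiseAffineOnUnit f n)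
    (c : ℝ) : {x ∈ Icc (0 : ℝ) 1 | f x = c}.ncard ≤ n := by
  obtain ⟨t, ht, h0, h1, haff⟩ := hf
  set S := {x ∈ Icc (0 : ℝ) 1 | f x = c}
  by_cases hfin : S.Finite
  swap
  · rw [Set.Infinite.ncard hfin]
    exact n.zero_le
  have hn : n ≠ 0 := by
    rintro rfl
    exact zero_ne_one (h0.symm.trans h1)
  -- an affine function takes the value `c` once or everywhere, and a whole piece is infinite
  have hpiece : ∀ i : Fin n, (Icc (t i.castSucc) (t i.succ) ∩ S).Subsingleton := by
    intro i x hx y hy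
    obtain ⟨a, b, hab⟩ := haff i
    by_contra hxy
    have ha : a = 0 := by
      have : a * x = a * y := by linarith [hab x hx.1, hab y hy.1, hx.2.2, hy.2.2]
      exact (mul_eq_mul_left_iff.1 this).resolve_left hxy
    refine hfin.not_infinite ((Icc_infinite (ht i.castSucc_lt_succ)).mono fun z hz => ?_)
    refine ⟨⟨?_, ?_⟩, ?_⟩
    · exact h0 ▸ (ht.monotone (Fin.zero_le _)).trans hz.1
    · exact hz.2.trans (h1 ▸ ht.monotone (Fin.le_last _))
    · rw [hab z hz, ← hx.2.2, hab x hx.1, ha, zero_mul, zero_mul]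
  have hcover : ∀ x ∈ S, ∃ i : Fin n, x ∈ Icc (t i.castSucc) (t i.succ) := fun x hx =>
    Fin.exists_mem_Icc_castSucc_succ hn t (by rw [h0, h1]; exact hx.1)
  have : NeZero n := ⟨hn⟩
  choose! σ hσ using hcover
  calc S.ncard ≤ (univ : Set (Fin n)).ncard :=
        ncard_le_ncard_of_injOn σ (fun _ _ => mem_univ _)
          fun x hx y hy hxy => hpiece (σ x) ⟨hσ x hx, hx⟩ ⟨hxy ▸ hσ y hy, hy⟩
    _ = n := by simp

theorem CrossingPartition.of_monotone {f : ℝ → ℝ} {N : ℕ} {φ : ℝ → ℕ} (hφ : Monotone φ)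
    (hN : ∀ x, φ x ≤ N) (hf : ∀ x y, φ x = φ y → (1 / 2 ≤ f x ↔ 1 / 2 ≤ f y)) :
    CrossingPartition f (N + 1) := by
  refine ⟨fun i => φ ⁻¹' {(i : ℕ)}, fun i => ordConnected_singleton.preimage_mono hφ, ?_, ?_, ?_⟩
  · exact eq_univ_of_forall fun x => mem_iUnion.2 ⟨⟨φ x, Nat.lt_succ_of_le (hN x)⟩, rfl⟩
  · exact fun i j hij => disjoint_left.2 fun x hi hj => hij (Fin.ext (hi.symm.trans hj))
  · exact fun i x hx y hy => hf x y (hx.trans hy.symm)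

theorem CrossingPartition.le_of_alternating {f : ℝ → ℝ} {n N : ℕ} (h : CrossingPartition f n)
    {g : ℕ → ℝ} (hg : Monotone g) (halt : ∀ m < N, ¬(1 / 2 ≤ f (g m) ↔ 1 / 2 ≤ f (g (m + 1)))) :
    N + 1 ≤ n := by
  obtain ⟨S, hconn, hcov, -, hconst⟩ := h
  have hmem : ∀ m, ∃ i, g m ∈ S i := fun m => mem_iUnion.1 (hcov ▸ mem_univ (g m))
  choose χ hχ using hmem
  have hsep : ∀ m m', m < m' → m' ≤ N → χ m ≠ χ m' := by
    intro m m' hlt hm' heq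
    have hnext : g (m + 1) ∈ S (χ m) :=
      (hconn _).out (hχ m) (heq ▸ hχ m') ⟨hg m.le_succ, hg hlt⟩
    exact halt m (by omega) (hconst _ _ (hχ m) _ hnext)
  have hinj : InjOn χ (Finset.range (N + 1) : Set ℕ) := by
    intro m hm m' hm' heq
    simp only [Finset.coe_range, mem_Iio] at hm hm'
    by_contra hne
    rcases lt_or_gt_of_ne hne with hlt | hlt
    · exact hsep m m' hlt (by omega) heq
    · exact hsep m' m hlt (by omega) heq.symm
  simpa using Finset.card_le_card_of_injOn χ (fun _ _ => Finset.mem_univ _) hinj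

section Tent

variable {x : ℝ}

theorem tent_of_le_half (h0 : 0 ≤ x) (h : x ≤ 1 / 2) : tent x = 2 * x := by
  rw [tent, if_pos ⟨h0, h⟩]

theorem tent_of_half_le (h : 1 / 2 ≤ x) (h1 : x ≤ 1) : tent x = 2 * (1 - x) := by
  simp only [tent, mem_Icc, mem_Ioc]
  split_ifs <;> grind

theorem tent_of_notMem_Icc (hx : x ∉ Icc (0 : ℝ) 1) : tent x = 0 := by
  simp only [tent, mem_Icc, mem_Ioc] at *
  split_ifs <;> grind

theorem tent_one_sub (x : ℝ) : tent (1 - x) = tent x := by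
  simp only [tent, mem_Icc, mem_Ioc]
  split_ifs <;> grind

theorem tent_iterate_of_notMem_Icc {k : ℕ} (hk : k ≠ 0) (hx : x ∉ Icc (0 : ℝ) 1) :
    tent^[k] x = 0 := by
  obtain ⟨k, rfl⟩ := Nat.exists_eq_succ_of_ne_zero hk
  have h0 : tent 0 = 0 := by simpa using tent_of_le_half le_rfl (by norm_num)
  rw [Function.iterate_succ_apply, tent_of_notMem_Icc hx, Function.iterate_fixed h0]

end Tent

theorem tent_iterate_add_div {k j : ℕ} (hj : j < 2 ^ k) {t : ℝ} (ht : t ∈ Icc (0 : ℝ) 1) :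
    tent^[k] ((j + t) / 2 ^ k) = if Even j then t else 1 - t := by
  induction k generalizing j t with
  | zero =>
    obtain rfl : j = 0 := by simpa using hj
    simp
  | succ k ih =>
    obtain ⟨q, r, hr, rfl⟩ : ∃ q r, r < 2 ∧ j = 2 * q + r :=
      ⟨j / 2, j % 2, Nat.mod_lt _ two_pos, (Nat.div_add_mod j 2).symm⟩
    have hq : q < 2 ^ k := by rw [pow_succ] at hj; omega
    have hr' : (r : ℝ) ≤ 1 := by exact_mod_cast Nat.le_of_lt_succ hr
    have hs : (r + t) / 2 ∈ Icc (0 : ℝ) 1 := ⟨by linarith [ht.1], by linarith [ht.2]⟩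
    have hsplit : ((2 * q + r : ℕ) + t) / 2 ^ (k + 1) = (q + (r + t) / 2) / 2 ^ k := by
      push_cast; rw [pow_succ]; field_simp; ring
    have hsymm : ∀ s : ℝ, tent (if Even q then s else 1 - s) = tent s := by
      intro s; split_ifs <;> simp only [tent_one_sub]
    rw [hsplit, Function.iterate_succ_apply', ih hq hs, hsymm]
    interval_cases r
    · rw [tent_of_le_half (by linarith [ht.1]) (by linarith [ht.2]), if_pos (by simp)]
      push_cast; ring
    · rw [tent_of_half_le (by push_cast; linarith [ht.1]) (by push_cast; linarith [ht.2]),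
        if_neg (by simp)]
      push_cast; ring

theorem tent_iterate_eq_of_mem_Icc {k j : ℕ} (hj : j < 2 ^ k) {x : ℝ}
    (hx : x ∈ Icc ((j : ℝ) / 2 ^ k) ((j + 1) / 2 ^ k)) :
    tent^[k] x = if Even j then 2 ^ k * x - j else j + 1 - 2 ^ k * x := by
  have hP : (0 : ℝ) < 2 ^ k := by positivity
  rw [mem_Icc, div_le_iff₀ hP, le_div_iff₀ hP] at hx
  have ht : 2 ^ k * x - j ∈ Icc (0 : ℝ) 1 := ⟨by linarith [hx.1], by linarith [hx.2]⟩
  have hx' : x = (j + (2 ^ k * x - j)) / 2 ^ k := by field_simp; ring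
  conv_lhs => rw [hx', tent_iterate_add_div hj ht]
  split_ifs <;> ring

theorem tent_iterate_natCast_div {k m : ℕ} (hm : m ≤ 2 ^ k) :
    tent^[k] (m / 2 ^ k) = if Even m then 0 else 1 := by
  rcases m with _ | j
  · simpa using tent_iterate_add_div (Nat.two_pow_pos k) (t := 0) ⟨le_rfl, zero_le_one⟩
  · have h := tent_iterate_add_div (k := k) (j := j) (by omega) (t := 1) ⟨zero_le_one, le_rfl⟩
    push_cast
    rw [h]
    split_ifs <;> simp_all [Nat.even_add_one]

theorem exists_mem_dyadic_Icc (k : ℕ) {x : ℝ} (hx : x ∈ Icc (0 : ℝ) 1) :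
    ∃ j : ℕ, j < 2 ^ k ∧ x ∈ Icc ((j : ℝ) / 2 ^ k) ((j + 1) / 2 ^ k) := by
  obtain ⟨i, hi⟩ := Fin.exists_mem_Icc_castSucc_succ (pow_ne_zero k two_ne_zero)
    (fun i : Fin (2 ^ k + 1) => (i : ℝ) / 2 ^ k) (x := x) (by simpa using hx)
  exact ⟨i, i.isLt, by simpa using hi⟩

theorem piecewiseAffineOnUnit_tent_iterate (k : ℕ) :
    PiecewiseAffineOnUnit (tent^[k]) (2 ^ k) := by
  refine ⟨fun i => (i : ℝ) / 2 ^ k, fun i j hij => ?_, by simp, by simp, fun i => ?_⟩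
  · have : ((i : ℕ) : ℝ) < (j : ℕ) := by exact_mod_cast hij
    dsimp only
    gcongr
  refine ⟨if Even (i : ℕ) then 2 ^ k else -2 ^ k, if Even (i : ℕ) then -(i : ℝ) else i + 1,
    fun x hx => ?_⟩
  rw [tent_iterate_eq_of_mem_Icc i.isLt (by simpa using hx)]
  split_ifs <;> ring

noncomputable def dyadicMidpoint (k j : ℕ) : ℝ := (j + 1 / 2) / 2 ^ k

theorem dyadicMidpoint_mem_Ioo (k j : ℕ) :
    dyadicMidpoint k j ∈ Ioo ((j : ℝ) / 2 ^ k) ((j + 1) / 2 ^ k) := by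
  constructor <;> rw [dyadicMidpoint] <;> gcongr <;> norm_num

theorem dyadicMidpoint_injective (k : ℕ) : Function.Injective (dyadicMidpoint k) := by
  intro i j h
  simpa [dyadicMidpoint] using h

theorem dyadicMidpoint_mem_Ioo_zero_one {k j : ℕ} (hj : j < 2 ^ k) :
    dyadicMidpoint k j ∈ Ioo (0 : ℝ) 1 := by
  have hj' : (j : ℝ) + 1 ≤ 2 ^ k := by exact_mod_cast hj
  obtain ⟨h0, h1⟩ := dyadicMidpoint_mem_Ioo k j
  exact ⟨lt_of_le_of_lt (by positivity) h0, h1.trans_le ((div_le_one (by positivity)).2 hj')⟩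

theorem tent_iterate_eq_half_iff {k j : ℕ} (hj : j < 2 ^ k) {x : ℝ}
    (hx : x ∈ Icc ((j : ℝ) / 2 ^ k) ((j + 1) / 2 ^ k)) :
    tent^[k] x = 1 / 2 ↔ x = dyadicMidpoint k j := by
  rw [tent_iterate_eq_of_mem_Icc hj hx, dyadicMidpoint]
  conv_rhs => rw [eq_div_iff (by positivity)]
  split_ifs <;> constructor <;> intro h <;> linarith

theorem ncard_tent_iterate_eq_half (k : ℕ) :
    {x ∈ Icc (0 : ℝ) 1 | tent^[k] x = 1 / 2}.ncard = 2 ^ k := by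
  have hset : {x ∈ Icc (0 : ℝ) 1 | tent^[k] x = 1 / 2} = dyadicMidpoint k '' Iio (2 ^ k) := by
    ext x
    constructor
    · rintro ⟨hx, hhalf⟩
      obtain ⟨j, hj, hxj⟩ := exists_mem_dyadic_Icc k hx
      exact ⟨j, hj, ((tent_iterate_eq_half_iff hj hxj).1 hhalf).symm⟩
    · rintro ⟨j, hj, rfl⟩
      have hmem := Ioo_subset_Icc_self (dyadicMidpoint_mem_Ioo k j)
      exact ⟨Ioo_subset_Icc_self (dyadicMidpoint_mem_Ioo_zero_one hj),
        (tent_iterate_eq_half_iff hj hmem).2 rfl⟩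
  rw [hset, ncard_image_of_injective _ (dyadicMidpoint_injective k)]
  simp

/-- The midpoint of an odd interval counts only once strictly passed because `{τ^[k] ≥ 1/2}` is
the union of the closed intervals from the midpoint of the dyadic interval `2 * i` to that of
`2 * i + 1`; the level sets of `crossingIndex k` are then the classes of the partition. -/
noncomputable def crossingIndex (k : ℕ) (x : ℝ) : ℕ :=
  ((Finset.range (2 ^ k)).filter fun j =>
    if Even j then dyadicMidpoint k j ≤ x else dyadicMidpoint k j < x).card

theorem monotone_crossingIndex (k : ℕ) : Monotone (crossingIndex k) := fun x y hxy =>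
  Finset.card_le_card <| Finset.monotone_filter_right _ fun j _ hj => by
    split_ifs at hj ⊢
    exacts [hj.trans hxy, hj.trans_le hxy]

theorem crossingIndex_le (k : ℕ) (x : ℝ) : crossingIndex k x ≤ 2 ^ k :=
  (Finset.card_filter_le _ _).trans (Finset.card_range _).le

theorem crossingIndex_eq_of_mem_Icc {k j : ℕ} (hj : j < 2 ^ k) {x : ℝ}
    (hx : x ∈ Icc ((j : ℝ) / 2 ^ k) ((j + 1) / 2 ^ k)) :
    crossingIndex k x = if (1 / 2 ≤ tent^[k] x ↔ Even j) then j + 1 else j := by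
  have hP : (0 : ℝ) < 2 ^ k := by positivity
  have hpassed : (if Even j then dyadicMidpoint k j ≤ x else dyadicMidpoint k j < x) ↔
      (1 / 2 ≤ tent^[k] x ↔ Even j) := by
    rw [tent_iterate_eq_of_mem_Icc hj hx, dyadicMidpoint, div_le_iff₀ hP, div_lt_iff₀ hP]
    by_cases he : Even j <;> simp only [he, if_true, if_false, iff_true, iff_false, not_le] <;>
      constructor <;> intro <;> linarith
  unfold crossingIndex
  refine (congrArg Finset.card ?_).trans (Finset.card_range _)
  ext i
  simp only [Finset.mem_filter, Finset.mem_range]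
  rcases lt_trichotomy i j with hi | rfl | hi
  · have hle : ((i : ℝ) + 1) / 2 ^ k ≤ j / 2 ^ k := by gcongr; exact_mod_cast hi
    have hlt : dyadicMidpoint k i < x := (dyadicMidpoint_mem_Ioo k i).2.trans_le (hle.trans hx.1)
    simp only [hlt, hlt.le, ite_self, and_true]
    split_ifs <;> omega
  · rw [hpassed]
    split_ifs with h
    · exact iff_of_true ⟨hj, h⟩ (Nat.lt_succ_self _)
    · exact iff_of_false (fun h' => h h'.2) (lt_irrefl _)
  · have hle : ((j : ℝ) + 1) / 2 ^ k ≤ i / 2 ^ k := by gcongr; exact_mod_cast hi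
    have hlt : x < dyadicMidpoint k i := hx.2.trans_lt (hle.trans_lt (dyadicMidpoint_mem_Ioo k i).1)
    simp only [not_le.2 hlt, not_lt.2 hlt.le, ite_self, and_false, false_iff, not_lt]
    split_ifs <;> omega

theorem half_le_tent_iterate_iff {k : ℕ} (hk : k ≠ 0) (x : ℝ) :
    1 / 2 ≤ tent^[k] x ↔ Odd (crossingIndex k x) := by
  by_cases hx : x ∈ Icc (0 : ℝ) 1
  · obtain ⟨j, hj, hxj⟩ := exists_mem_dyadic_Icc k hx
    rw [crossingIndex_eq_of_mem_Icc hj hxj]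
    split_ifs with h
    · rw [h, Nat.odd_add_one, Nat.not_odd_iff_even]
    · rw [← Nat.not_even_iff_odd]
      tauto
  rw [tent_iterate_of_notMem_Icc hk hx]
  simp only [mem_Icc, not_and_or, not_le] at hx
  have hindex : crossingIndex k x = 0 ∨ crossingIndex k x = 2 ^ k := by
    unfold crossingIndex
    rcases hx with hx | hx
    · refine Or.inl (Finset.card_eq_zero.2 (Finset.filter_false_of_mem fun j hj => ?_))
      have := (dyadicMidpoint_mem_Ioo_zero_one (Finset.mem_range.1 hj)).1
      split_ifs <;> linarith
    · refine Or.inr ?_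
      rw [Finset.filter_true_of_mem fun j hj => ?_, Finset.card_range]
      have := (dyadicMidpoint_mem_Ioo_zero_one (Finset.mem_range.1 hj)).2
      split_ifs <;> linarith
  rcases hindex with h | h <;> rw [h]
  · norm_num
  · simp [← Nat.not_even_iff_odd, Nat.even_pow, hk]

/-- `τ^[k]` is piecewise affine on `[0,1]` with exactly `2^k` pieces,
attains the value `1/2` at exactly `2^k` points of `[0,1]`, and its crossing
number is `2^k + 1`. -/
theorem tent_iterate_crossing_number (k : ℕ) (hk : 1 ≤ k) :
    PiecewiseAffineOnUnit (tent^[k]) (2 ^ k) ∧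
    (∀ n < 2 ^ k, ¬ PiecewiseAffineOnUnit (tent^[k]) n) ∧
    ({x ∈ Set.Icc (0 : ℝ) 1 | tent^[k] x = 1 / 2}.ncard = 2 ^ k) ∧
    IsLeast {n : ℕ | CrossingPartition (tent^[k]) n} (2 ^ k + 1) := by
  have hk₀ : k ≠ 0 := Nat.one_le_iff_ne_zero.1 hk
  refine ⟨piecewiseAffineOnUnit_tent_iterate k, fun n hn h => ?_, ncard_tent_iterate_eq_half k,
    ?_, fun n hn => ?_⟩
  · have := h.ncard_le (1 / 2)
    rw [ncard_tent_iterate_eq_half] at this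
    omega
  · refine CrossingPartition.of_monotone (monotone_crossingIndex k) (crossingIndex_le k) ?_
    intro x y hxy
    rw [half_le_tent_iterate_iff hk₀, half_le_tent_iterate_iff hk₀, hxy]
  · refine hn.le_of_alternating (g := fun m : ℕ => (m : ℝ) / 2 ^ k)
      (fun a b hab => by dsimp only; gcongr) fun m hm => ?_
    rw [tent_iterate_natCast_div hm.le, tent_iterate_natCast_div hm]
    simp only [Nat.even_add_one]
    split_ifs <;> norm_num
end

section
/- Let f : [0,1] → ℝ be piecewise affine with at most p pieces, and suppose g : [0,1] → [0,1] is a continuous function whose graph crosses the level 1/2 at least n times in the sense that there exist points 0 ≤ x₀ < x₁ < ⋯ < x_n ≤ 1 with g(x_i) ≥ 1/2 for even i and g(x_i) < 1/2 for odd i (or vice versa). If p < n/2, then ∫₀¹ |f(x) − g(x)| dx ≥ (a positive constant depending on the minimal gap between consecutive x_i and the deviation of g from 1/2). In the specific case g = τ^[k] with its 2^k + 1 equispaced extrema on [0,1], any piecewise affine f with at most 2^{k−3} pieces satisfies ∫₀¹ |f − τ^[k]| ≥ 1/64. -/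
/-- `f` is piecewise affine on `[0,1]` with at most `n` pieces: `[0,1]` is
covered by `n` intervals on each of which `f` is affine. -/
def PiecewiseAffineOnUnitAtMost (f : ℝ → ℝ) (n : ℕ) : Prop :=
  ∃ S : Fin n → Set ℝ, (∀ i, (S i).OrdConnected) ∧ Set.Icc (0 : ℝ) 1 ⊆ (⋃ i, S i) ∧
    ∀ i, ∃ a b : ℝ, ∀ x ∈ S i, f x = a * x + b

open MeasureTheory Set Function
open scoped Finset

theorem mul_add_eq_mul_add_of_eq_of_eq {a₁ b₁ a₂ b₂ c c' : ℝ} (hcc' : c ≠ c')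
    (hc : a₁ * c + b₁ = a₂ * c + b₂) (hc' : a₁ * c' + b₁ = a₂ * c' + b₂) (x : ℝ) :
    a₁ * x + b₁ = a₂ * x + b₂ := by
  obtain rfl : a₁ = a₂ := mul_right_cancel₀ (sub_ne_zero.2 hcc') (by linear_combination hc - hc')
  linarith

theorem mul_add_mem_uIcc {a b u v w : ℝ} (hv : v ∈ Icc u w) :
    a * v + b ∈ uIcc (a * u + b) (a * w + b) := by
  rcases le_total 0 a with ha | ha
  · exact Icc_subset_uIcc ⟨by nlinarith [hv.1], by nlinarith [hv.2]⟩
  · exact Icc_subset_uIcc' ⟨by nlinarith [hv.2], by nlinarith [hv.1]⟩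

namespace PiecewiseAffineOnUnitAtMost

variable {f : ℝ → ℝ} {p : ℕ}

theorem integrableOn (hf : PiecewiseAffineOnUnitAtMost f p) : IntegrableOn f (Icc 0 1) := by
  obtain ⟨S, hS, hcov, haff⟩ := hf
  have hcov' : Icc (0 : ℝ) 1 ⊆ ⋃ i, S i ∩ Icc 0 1 := fun x hx =>
    mem_iUnion.2 ((mem_iUnion.1 (hcov hx)).imp fun _ hi => ⟨hi, hx⟩)
  refine IntegrableOn.mono_set ?_ hcov'
  refine integrableOn_finite_iUnion.2 fun i => ?_
  obtain ⟨a, b, hab⟩ := haff i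
  exact ((continuous_const.mul continuous_id).add continuous_const).integrableOn_Icc.mono_set
    inter_subset_right |>.congr_fun (fun x hx => (hab x hx.1).symm)
    ((hS i).measurableSet.inter measurableSet_Icc)

/-- An open interval avoiding all breakpoints lies, from each of its points on, inside a single
piece. -/
theorem exists_breakpoints (hf : PiecewiseAffineOnUnitAtMost f p) :
    ∃ s : Fin p → ℝ, ∀ u w, Ioo u w ⊆ Icc 0 1 → (∀ i, s i ∉ Ioo u w) →
      ∃ a b : ℝ, EqOn f (fun x => a * x + b) (Ioo u w) := by
  obtain ⟨S, hS, hcov, haff⟩ := hf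
  choose A B hAB using haff
  refine ⟨fun i => sSup (S i ∩ Icc 0 1), fun u w hsub hclean => ?_⟩
  have hreach : ∀ x ∈ Ioo u w, ∃ i, Ico x w ⊆ S i := by
    intro x hx
    obtain ⟨i, hi⟩ := mem_iUnion.1 (hcov (hsub hx))
    refine ⟨i, fun y hy => ?_⟩
    have hbdd : BddAbove (S i ∩ Icc 0 1) := bddAbove_Icc.mono inter_subset_right
    have hx_le : x ≤ sSup (S i ∩ Icc 0 1) := le_csSup hbdd ⟨hi, hsub hx⟩
    have hw_le : w ≤ sSup (S i ∩ Icc 0 1) := not_lt.1 fun h => hclean i ⟨hx.1.trans_le hx_le, h⟩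
    have hne : (S i ∩ Icc 0 1).Nonempty := ⟨x, hi, hsub hx⟩
    obtain ⟨z, hz, hyz⟩ := exists_lt_of_lt_csSup hne (hy.2.trans_le hw_le)
    exact (hS i).out hi hz.1 ⟨hy.1, hyz.le⟩
  rcases (Ioo u w).eq_empty_or_nonempty with h | ⟨m, hm⟩
  · exact ⟨0, 0, by simp [h]⟩
  obtain ⟨i₀, hi₀⟩ := hreach m hm
  refine ⟨A i₀, B i₀, fun x hx => ?_⟩
  obtain ⟨i, hi⟩ := hreach x hx
  have hc : max x m ∈ Ico x w ∩ Ico m w :=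
    ⟨⟨le_max_left _ _, max_lt hx.2 hm.2⟩, ⟨le_max_right _ _, max_lt hx.2 hm.2⟩⟩
  have hc' : (max x m + w) / 2 ∈ Ico x w ∩ Ico m w :=
    ⟨⟨by linarith [hc.1.1, hc.1.2], by linarith [hc.1.2]⟩,
      ⟨by linarith [hc.2.1, hc.2.2], by linarith [hc.1.2]⟩⟩
  show f x = A i₀ * x + B i₀
  rw [hAB i x (hi ⟨le_rfl, hx.2⟩)]
  refine mul_add_eq_mul_add_of_eq_of_eq (c := max x m) (c' := (max x m + w) / 2)
    (ne_of_lt (by linarith [hc.1.2])) ?_ ?_ x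
  · rw [← hAB i _ (hi hc.1), ← hAB i₀ _ (hi₀ hc.2)]
  · rw [← hAB i _ (hi hc'.1), ← hAB i₀ _ (hi₀ hc'.2)]

end PiecewiseAffineOnUnitAtMost

theorem pairwise_disjoint_Ioo_of_le {ι : Type*} [LinearOrder ι] {L R : ι → ℝ}
    (h : ∀ i j, i < j → R i ≤ L j) : Pairwise (Disjoint on fun i => Ioo (L i) (R i)) :=
  (pairwise_disjoint_on _).2 fun i j hij =>
    disjoint_left.2 fun _ hi hj => (hi.2.trans_le (h i j hij)).not_gt hj.1

theorem card_le_card_filter_forall_notMem_add {ι α : Type*} {p : ℕ} (J : Finset ι)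
    {I : ι → Set α} (hI : Pairwise (Disjoint on I)) (s : Fin p → α)
    [DecidablePred fun j => ∀ i, s i ∉ I j] :
    #J ≤ #(J.filter fun j => ∀ i, s i ∉ I j) + p := by
  classical
  have hbad : #(J.filter fun j => ¬ ∀ i, s i ∉ I j) ≤ p :=
    calc #(J.filter fun j => ¬ ∀ i, s i ∉ I j)
        ≤ #(Finset.univ.biUnion fun i => J.filter fun j => s i ∈ I j) :=
          Finset.card_le_card fun j hj => by simp_all
      _ ≤ ∑ i, #(J.filter fun j => s i ∈ I j) := Finset.card_biUnion_le
      _ ≤ ∑ _i : Fin p, 1 := Finset.sum_le_sum fun i _ => Finset.card_le_one.2 fun j hj j' hj' =>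
          hI.eq (not_disjoint_iff.2 ⟨s i, (Finset.mem_filter.1 hj).2, (Finset.mem_filter.1 hj').2⟩)
      _ = p := by simp
  have := Finset.card_filter_add_card_filter_not (s := J) fun j => ∀ i, s i ∉ I j
  omega

theorem sum_setIntegral_le_setIntegral {X ι : Type*} [MeasurableSpace X] {μ : Measure X}
    {f : X → ℝ} {t : Set X} (J : Finset ι) {I : ι → Set X}
    (hI : ∀ j ∈ J, MeasurableSet (I j)) (hdisj : (J : Set ι).Pairwise (Disjoint on I))
    (hIt : ∀ j ∈ J, I j ⊆ t) (hf : IntegrableOn f t μ) (hf₀ : 0 ≤ᵐ[μ.restrict t] f) :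
    ∑ j ∈ J, ∫ x in I j, f x ∂μ ≤ ∫ x in t, f x ∂μ := by
  rw [← integral_biUnion_finset J hI hdisj fun j hj => hf.mono_set (hIt j hj)]
  exact setIntegral_mono_set hf hf₀ (iUnion₂_subset hIt).eventuallyLE

theorem setIntegral_pos_of_continuousOn {X : Type*} [TopologicalSpace X] [MeasurableSpace X]
    [OpensMeasurableSpace X] {μ : Measure X} [μ.IsOpenPosMeasure] {φ : X → ℝ} {U : Set X}
    (hU : IsOpen U) (hφ : ContinuousOn φ U) (hφi : IntegrableOn φ U μ) (hφ₀ : ∀ x ∈ U, 0 ≤ φ x)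
    {y : X} (hy : y ∈ U) (hφy : φ y ≠ 0) : 0 < ∫ x in U, φ x ∂μ := by
  rw [setIntegral_pos_iff_support_of_nonneg_ae (ae_restrict_of_forall_mem hU.measurableSet hφ₀) hφi]
  exact ((hφ.isOpen_inter_preimage hU isOpen_compl_singleton).measure_pos μ ⟨y, hy, hφy⟩).trans_le
    (measure_mono fun x hx => ⟨hx.2, hx.1⟩)

theorem exists_mem_Ioo_ne_of_crossing {g : ℝ → ℝ} {u v w a b c : ℝ}
    (hg : ContinuousOn g (Icc u w)) (huv : u < v) (hvw : v < w)
    (huw : c ≤ g u ↔ c ≤ g w) (huv' : c ≤ g u ↔ ¬ c ≤ g v) :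
    ∃ y ∈ Ioo u w, a * y + b ≠ g y := by
  by_contra! h
  have heq : EqOn (fun y => a * y + b) g (Icc u w) :=
    EqOn.of_subset_closure h (by fun_prop) hg Ioo_subset_Icc_self
      (closure_Ioo (huv.trans hvw).ne).ge
  have hmem := mul_add_mem_uIcc (a := a) (b := b) ⟨huv.le, hvw.le⟩
  simp only [heq ⟨le_rfl, (huv.trans hvw).le⟩, heq ⟨huv.le, hvw.le⟩,
    heq ⟨(huv.trans hvw).le, le_rfl⟩, mem_uIcc] at hmem
  by_cases hc : c ≤ g u
  · have := huw.1 hc; have := huv'.1 hc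
    rcases hmem with ⟨h₁, -⟩ | ⟨h₁, -⟩ <;> linarith
  · have := mt huw.2 hc; have := not_not.1 (mt huv'.2 hc)
    rcases hmem with ⟨-, h₂⟩ | ⟨-, h₂⟩ <;> linarith

theorem crossing_of_alternating {g : ℝ → ℝ} {n : ℕ} {x : Fin (n + 1) → ℝ}
    (hosc : (∀ i : Fin (n + 1), if Even (i : ℕ) then 1 / 2 ≤ g (x i) else g (x i) < 1 / 2) ∨
      (∀ i : Fin (n + 1), if Even (i : ℕ) then g (x i) < 1 / 2 else 1 / 2 ≤ g (x i)))
    (i : ℕ) (hi : i + 2 ≤ n) :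
    (1 / 2 ≤ g (x ⟨i, by omega⟩) ↔ 1 / 2 ≤ g (x ⟨i + 2, by omega⟩)) ∧
      (1 / 2 ≤ g (x ⟨i, by omega⟩) ↔ ¬ 1 / 2 ≤ g (x ⟨i + 1, by omega⟩)) := by
  rcases hosc with h | h <;>
  · have h₀ := h ⟨i, by omega⟩
    have h₁ := h ⟨i + 1, by omega⟩
    have h₂ := h ⟨i + 2, by omega⟩
    by_cases he : Even i <;> simp_all [parity_simps, ← not_lt]

theorem integral_abs_sub_pos_of_alternating {f g : ℝ → ℝ} {p n : ℕ} {x : Fin (n + 1) → ℝ}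
    (hf : PiecewiseAffineOnUnitAtMost f p) (hg : ContinuousOn g (Icc 0 1)) (hx : StrictMono x)
    (hx0 : 0 ≤ x 0) (hxn : x (Fin.last n) ≤ 1)
    (hosc : (∀ i : Fin (n + 1), if Even (i : ℕ) then 1 / 2 ≤ g (x i) else g (x i) < 1 / 2) ∨
      (∀ i : Fin (n + 1), if Even (i : ℕ) then g (x i) < 1 / 2 else 1 / 2 ≤ g (x i)))
    (hpn : p < n / 2) :
    0 < ∫ t in Icc 0 1, |f t - g t| := by
  obtain ⟨s, hs⟩ := hf.exists_breakpoints
  have hx01 : ∀ i, x i ∈ Icc 0 1 := fun i =>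
    ⟨hx0.trans (hx.monotone (Fin.zero_le i)), (hx.monotone (Fin.le_last i)).trans hxn⟩
  let L : Fin (p + 1) → ℝ := fun j => x ⟨2 * j, by omega⟩
  let R : Fin (p + 1) → ℝ := fun j => x ⟨2 * j + 2, by omega⟩
  have hdisj : Pairwise (Disjoint on fun j => Ioo (L j) (R j)) :=
    pairwise_disjoint_Ioo_of_le fun j j' hjj' => hx.monotone (Fin.mk_le_mk.2 (by omega))
  obtain ⟨j, hj⟩ : ∃ j, ∀ i, s i ∉ Ioo (L j) (R j) := by
    have := card_le_card_filter_forall_notMem_add Finset.univ hdisj s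
    rw [Finset.card_univ, Fintype.card_fin] at this
    obtain ⟨j, hj⟩ := Finset.card_pos.1 (Nat.le_of_add_le_add_right ((add_comm 1 p).trans_le this))
    exact ⟨j, (Finset.mem_filter.1 hj).2⟩
  have hsub : Icc (L j) (R j) ⊆ Icc 0 1 := Icc_subset_Icc (hx01 _).1 (hx01 _).2
  obtain ⟨a, b, hab⟩ := hs _ _ (Ioo_subset_Icc_self.trans hsub) hj
  obtain ⟨y, hy, hne⟩ := exists_mem_Ioo_ne_of_crossing (a := a) (b := b) (hg.mono hsub)
    (hx (Fin.mk_lt_mk.2 (by omega))) (hx (Fin.mk_lt_mk.2 (by omega)))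
    (crossing_of_alternating hosc (2 * j) (by omega)).1
    (crossing_of_alternating hosc (2 * j) (by omega)).2
  have hint : IntegrableOn (fun t => |f t - g t|) (Icc 0 1) :=
    (hf.integrableOn.sub (hg.integrableOn_compact isCompact_Icc)).abs
  have hcont : ContinuousOn (fun t => |f t - g t|) (Ioo (L j) (R j)) := by
    have hgU := hg.mono (Ioo_subset_Icc_self.trans hsub)
    exact ContinuousOn.congr (f := fun t => |a * t + b - g t|) (by fun_prop)
      fun t ht => by rw [hab ht]
  calc 0 < ∫ t in Ioo (L j) (R j), |f t - g t| :=
        setIntegral_pos_of_continuousOn isOpen_Ioo hcont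
          (hint.mono_set (Ioo_subset_Icc_self.trans hsub)) (fun _ _ => abs_nonneg _) hy
          (by rw [hab hy]; exact abs_ne_zero.2 (sub_ne_zero.2 hne))
    _ ≤ ∫ t in Icc 0 1, |f t - g t| :=
        setIntegral_mono_set hint (ae_of_all _ fun _ => abs_nonneg _)
          (Ioo_subset_Icc_self.trans hsub).eventuallyLE

theorem tent_eq_one_sub_abs {x : ℝ} (hx : x ∈ Icc 0 1) : tent x = 1 - |2 * x - 1| := by
  unfold tent
  split_ifs with h₁ h₂
  · rw [abs_of_nonpos (by linarith [h₁.2])]; ring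
  · rw [abs_of_nonneg (by linarith [h₂.1])]; ring
  · exact absurd (⟨hx.1, not_lt.1 fun h => h₂ ⟨h, hx.2⟩⟩ : x ∈ Icc 0 (1 / 2)) h₁

theorem mapsTo_tent : MapsTo tent (Icc 0 1) (Icc 0 1) := fun x hx => by
  have := abs_le.2 (⟨by linarith [hx.1], by linarith [hx.2]⟩ : -1 ≤ 2 * x - 1 ∧ 2 * x - 1 ≤ 1)
  rw [tent_eq_one_sub_abs hx]
  exact ⟨by linarith, by linarith [abs_nonneg (2 * x - 1)]⟩

theorem continuousOn_tent_iterate (k : ℕ) : ContinuousOn tent^[k] (Icc 0 1) := by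
  induction k with
  | zero => exact continuousOn_id
  | succ k ih =>
    have htent : ContinuousOn tent (Icc 0 1) :=
      ContinuousOn.congr (f := fun x => 1 - |2 * x - 1|) (by fun_prop)
        fun _ hx => tent_eq_one_sub_abs hx
    rw [Function.iterate_succ]
    exact ih.comp htent mapsTo_tent

/-- On `[0,1]`, `tent^[k]` is the sawtooth with teeth `[2j/2^k, (2j+2)/2^k]`; `j` is allowed to be
an integer because the reflection `x ↦ 1 - x` in the inductive step sends `j` to `2^k - 1 - j`. -/
theorem tent_iterate_eq (k : ℕ) {x : ℝ} (hx : x ∈ Icc 0 1) (j : ℤ)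
    (hj : |2 ^ k * x - (2 * j + 1)| ≤ 1) : tent^[k] x = 1 - |2 ^ k * x - (2 * j + 1)| := by
  induction k generalizing x j with
  | zero =>
    obtain ⟨hj₁, hj₂⟩ := abs_le.1 hj
    simp only [pow_zero, one_mul] at hj₁ hj₂ ⊢
    have : j = -1 ∨ j = 0 := by
      have : (-1 : ℤ) ≤ j := by exact_mod_cast (by linarith [hx.1] : (-1 : ℝ) ≤ j)
      have : j < 1 := by exact_mod_cast (by linarith [hx.2] : (j : ℝ) < 1)
      omega
    rcases this with rfl | rfl
    · obtain rfl : x = 0 := by push_cast at hj₂; linarith [hx.1]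
      norm_num
    · push_cast
      rw [abs_of_nonpos (by linarith [hx.2])]
      simp
  | succ k ih =>
    rw [Function.iterate_succ_apply, tent_eq_one_sub_abs hx]
    have htx := mapsTo_tent hx
    rw [tent_eq_one_sub_abs hx] at htx
    rcases le_total x (1 / 2) with h | h
    · rw [abs_of_nonpos (by linarith)] at htx ⊢
      have e : (2 : ℝ) ^ (k + 1) * x = 2 ^ k * (1 - -(2 * x - 1)) := by ring
      rw [e] at hj ⊢
      exact ih htx j hj
    · rw [abs_of_nonneg (by linarith)] at htx ⊢
      have e : (2 : ℝ) ^ (k + 1) * x - (2 * j + 1) =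
          -(2 ^ k * (1 - (2 * x - 1)) - (2 * ((2 ^ k - 1 - j : ℤ) : ℝ) + 1)) := by
        push_cast; ring
      rw [e, abs_neg] at hj ⊢
      exact ih htx _ hj

theorem integral_mul_add (α β l r : ℝ) :
    ∫ u in l..r, (α * u + β) = α * (r ^ 2 - l ^ 2) / 2 + β * (r - l) := by
  rw [intervalIntegral.integral_add ((continuous_const_mul α).intervalIntegrable _ _)
    intervalIntegrable_const, intervalIntegral.integral_const_mul, integral_id,
    intervalIntegral.integral_const, smul_eq_mul]
  ring

theorem abs_integral_mul_add_le {φ : ℝ → ℝ} {l r α β : ℝ} (hlr : l ≤ r)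
    (hφ : EqOn φ (fun u => α * u + β) (Icc l r)) :
    |α * (r ^ 2 - l ^ 2) / 2 + β * (r - l)| ≤ ∫ u in l..r, |φ u| := by
  rw [← integral_mul_add, ← intervalIntegral.integral_congr (by rwa [uIcc_of_le hlr])]
  exact intervalIntegral.abs_integral_le_integral_abs hlr

/-- The weights `+1, -1, -1, +1` on the four quarters of `[-1,1]` annihilate affine functions and
pair with the hat `1 - |u|` to `-1/2`. -/
theorem one_half_le_integral_abs_mul_add_sub_hat (a b : ℝ) :
    1 / 2 ≤ ∫ u in (-1)..1, |a * u + b - (1 - |u|)| := by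
  set φ : ℝ → ℝ := fun u => a * u + b - (1 - |u|)
  have hint : ∀ l r, IntervalIntegrable (fun u => |φ u|) volume l r :=
    fun l r => (by fun_prop : Continuous fun u => |φ u|).intervalIntegrable l r
  have hneg : ∀ l r, l ≤ r → r ≤ 0 →
      |(a - 1) * (r ^ 2 - l ^ 2) / 2 + (b - 1) * (r - l)| ≤ ∫ u in l..r, |φ u| :=
    fun l r hlr hr => abs_integral_mul_add_le hlr fun u hu => by
      simp only [φ, abs_of_nonpos (hu.2.trans hr)]; ring
  have hpos : ∀ l r, 0 ≤ l → l ≤ r →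
      |(a + 1) * (r ^ 2 - l ^ 2) / 2 + (b - 1) * (r - l)| ≤ ∫ u in l..r, |φ u| :=
    fun l r hl hlr => abs_integral_mul_add_le hlr fun u hu => by
      simp only [φ, abs_of_nonneg (hl.trans hu.1)]; ring
  have h₁ := hneg (-1) (-1 / 2) (by norm_num) (by norm_num)
  have h₂ := hneg (-1 / 2) 0 (by norm_num) le_rfl
  have h₃ := hpos 0 (1 / 2) le_rfl (by norm_num)
  have h₄ := hpos (1 / 2) 1 (by norm_num) (by norm_num)
  rw [← intervalIntegral.integral_add_adjacent_intervals (hint (-1) (-1 / 2)) (hint _ 1),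
    ← intervalIntegral.integral_add_adjacent_intervals (hint (-1 / 2) 0) (hint _ 1),
    ← intervalIntegral.integral_add_adjacent_intervals (hint 0 (1 / 2)) (hint _ 1)]
  linarith [le_abs_self ((a - 1) * ((-1 / 2) ^ 2 - (-1) ^ 2) / 2 + (b - 1) * (-1 / 2 - -1)),
    neg_abs_le ((a - 1) * (0 ^ 2 - (-1 / 2) ^ 2) / 2 + (b - 1) * (0 - -1 / 2)),
    neg_abs_le ((a + 1) * ((1 / 2) ^ 2 - 0 ^ 2) / 2 + (b - 1) * (1 / 2 - 0)),
    le_abs_self ((a + 1) * (1 ^ 2 - (1 / 2) ^ 2) / 2 + (b - 1) * (1 - 1 / 2))]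

theorem inv_two_mul_le_integral_abs_mul_add_sub_hat {l : ℝ} (hl : 0 < l) (a b c : ℝ) :
    (2 * l)⁻¹ ≤ ∫ x in c / l..(c + 2) / l, |a * x + b - (1 - |l * x - (c + 1)|)| := by
  have hsub := intervalIntegral.integral_comp_mul_sub
    (fun u => |a / l * u + (a * (c + 1) / l + b) - (1 - |u|)|) hl.ne' (c + 1)
    (a := c / l) (b := (c + 2) / l)
  have hx : ∀ x, a / l * (l * x - (c + 1)) + (a * (c + 1) / l + b) = a * x + b := fun x => by
    field_simp; ring
  simp only [hx, mul_div_cancel₀ _ hl.ne'] at hsub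
  rw [hsub, smul_eq_mul, mul_inv, mul_comm, show c - (c + 1) = -1 by ring,
    show c + 2 - (c + 1) = 1 by ring]
  exact mul_le_mul_of_nonneg_left (by simpa using one_half_le_integral_abs_mul_add_sub_hat _ _)
    (inv_nonneg.2 hl.le)

theorem sub_div_le_integral_abs_sub_tent_iterate {f : ℝ → ℝ} {p : ℕ}
    (hf : PiecewiseAffineOnUnitAtMost f p) (k : ℕ) :
    ((2 : ℝ) ^ k - p) / 2 ^ (k + 2) ≤ ∫ t in Icc 0 1, |f t - tent^[k + 1] t| := by
  obtain ⟨s, hs⟩ := hf.exists_breakpoints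
  set l : ℝ := 2 ^ (k + 1) with hl_def
  have hl : 0 < l := by positivity
  let I : ℕ → Set ℝ := fun j => Ioo (2 * j / l) ((2 * j + 2) / l)
  have hdisj : Pairwise (Disjoint on I) := pairwise_disjoint_Ioo_of_le fun j j' hjj' =>
    div_le_div_of_nonneg_right (by norm_cast; omega) hl.le
  have hI : ∀ j ∈ Finset.range (2 ^ k), I j ⊆ Icc 0 1 := fun j hj =>
    Ioo_subset_Icc_self.trans <| Icc_subset_Icc (by positivity) <| by
      rw [div_le_one hl, hl_def, pow_succ]
      have : (j : ℝ) + 1 ≤ 2 ^ k := by exact_mod_cast Finset.mem_range.1 hj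
      linarith
  let good := (Finset.range (2 ^ k)).filter fun j => ∀ i, s i ∉ I j
  have hgood : (2 : ℝ) ^ k - p ≤ #good := by
    have := card_le_card_filter_forall_notMem_add (Finset.range (2 ^ k)) hdisj s
    rw [Finset.card_range] at this
    have : ((2 ^ k : ℕ) : ℝ) ≤ #good + p := by exact_mod_cast this
    push_cast at this
    linarith
  have hbump : ∀ j ∈ good, (2 * l)⁻¹ ≤ ∫ t in I j, |f t - tent^[k + 1] t| := by
    intro j hj
    obtain ⟨hj, hclean⟩ := Finset.mem_filter.1 hj
    obtain ⟨a, b, hab⟩ := hs _ _ (hI j hj) hclean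
    convert inv_two_mul_le_integral_abs_mul_add_sub_hat hl a b (2 * j) using 1
    rw [intervalIntegral.integral_of_le (by gcongr; linarith), integral_Ioc_eq_integral_Ioo]
    refine setIntegral_congr_fun measurableSet_Ioo fun x hx => ?_
    have hlx : |l * x - (2 * j + 1)| ≤ 1 := by
      have h₁ := (div_lt_iff₀' hl).1 hx.1
      have h₂ := (lt_div_iff₀' hl).1 hx.2
      exact abs_le.2 ⟨by linarith, by linarith⟩
    simp only [hab hx, tent_iterate_eq (k + 1) (hI j hj hx) j (by simpa using hlx)]
    rfl
  have hint : IntegrableOn (fun t => |f t - tent^[k + 1] t|) (Icc 0 1) :=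
    (hf.integrableOn.sub ((continuousOn_tent_iterate _).integrableOn_compact isCompact_Icc)).abs
  calc ((2 : ℝ) ^ k - p) / 2 ^ (k + 2) ≤ #good • (2 * l)⁻¹ := by
        rw [nsmul_eq_mul, ← div_eq_mul_inv, hl_def, ← pow_succ']
        gcongr
    _ ≤ ∑ j ∈ good, ∫ t in I j, |f t - tent^[k + 1] t| := Finset.card_nsmul_le_sum _ _ _ hbump
    _ ≤ ∫ t in Icc 0 1, |f t - tent^[k + 1] t| :=
        sum_setIntegral_le_setIntegral good (fun _ _ => measurableSet_Ioo)
          (hdisj.set_pairwise _) (fun j hj => hI j (Finset.mem_filter.1 hj).1) hint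
          (ae_of_all _ fun _ => abs_nonneg _)

/-- a piecewise affine function with too few pieces cannot match a
function crossing the level `1/2` many times (so the `L¹` distance is positive);
in the specific case `g = τ^[k]`, any piecewise affine `f` with at most `2^(k-3)`
pieces is at `L¹` distance at least `1/64` from `τ^[k]` on `[0,1]`. -/
theorem inapproximability_of_oscillations :
    (∀ (f g : ℝ → ℝ) (p n : ℕ) (x : Fin (n + 1) → ℝ),
      PiecewiseAffineOnUnitAtMost f p →
      ContinuousOn g (Set.Icc (0 : ℝ) 1) →
      (∀ t ∈ Set.Icc (0 : ℝ) 1, g t ∈ Set.Icc (0 : ℝ) 1) →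
      StrictMono x → 0 ≤ x 0 → x (Fin.last n) ≤ 1 →
      ((∀ i : Fin (n + 1), if Even (i : ℕ) then 1 / 2 ≤ g (x i) else g (x i) < 1 / 2) ∨
        (∀ i : Fin (n + 1), if Even (i : ℕ) then g (x i) < 1 / 2 else 1 / 2 ≤ g (x i))) →
      p < n / 2 →
      ∃ C : ℝ, 0 < C ∧ C ≤ ∫ t in Set.Icc (0 : ℝ) 1, |f t - g t|) ∧
    (∀ k : ℕ, 3 ≤ k → ∀ f : ℝ → ℝ,
      PiecewiseAffineOnUnitAtMost f (2 ^ (k - 3)) →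
      (1 : ℝ) / 64 ≤ ∫ t in Set.Icc (0 : ℝ) 1, |f t - tent^[k] t|) := by
  refine ⟨fun f g p n x hf hg _ hx hx0 hxn hosc hpn =>
    ⟨_, integral_abs_sub_pos_of_alternating hf hg hx hx0 hxn hosc hpn, le_rfl⟩, ?_⟩
  intro k hk f hf
  obtain ⟨K, rfl⟩ : ∃ K, k = K + 3 := ⟨k - 3, by omega⟩
  refine le_trans ?_ (sub_div_le_integral_abs_sub_tent_iterate hf (K + 2))
  rw [Nat.add_sub_cancel]
  push_cast
  rw [show K + 2 + 2 = K + 4 by ring, pow_add, pow_add, le_div_iff₀ (by positivity)]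
  nlinarith [pow_pos (two_pos : (0 : ℝ) < 2) K]
end

section
/- Let d_x, d_y ≥ 1 and let K ⊂ ℝ^{d_x} be a compact set with nonempty interior. If m ≤ d_x, then the class of arbitrary-depth width-m Leaky-ReLU networks from ℝ^{d_x} to ℝ^{d_y} is NOT dense in C(K; ℝ^{d_y}) with respect to the uniform norm. (Necessity direction of the minimum-width theorem, weak form: width at least d_x + 1 is necessary.) -/
/-!
For `α > 0` the Leaky-ReLU is a homeomorphism of `ℝ`. If the affine map feeding a hidden layer of
width `k ≤ dx` is injective, then `k = dx` and the layer acts as a homeomorphism of `ℝ^dx`;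
otherwise the layer is constant along a kernel direction `u`. By induction, a network of width
at most `dx` is either affine after a homeomorphism `ψ` of `ℝ^dx`, or constant along every curve
`t ↦ ψ⁻¹ (ψ x + t • u)`. Such a curve leaves every ball around `x`, so each output coordinate
attains, on every sphere around `x`, a value at least its value at `x`. This rules out uniform
approximation of `x ↦ -dist x x₀` on a ball around `x₀`.
-/

/-- The Leaky-ReLU activation with parameter `α`. -/
noncomputable def leakyReLU (α : ℝ) (x : ℝ) : ℝ := if 0 < x then x else α * x

/-- Arbitrary-depth Leaky-ReLU networks from `ℝ^dx` in which every hidden layer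
(i.e. every layer to which the activation is applied) has at most `m` neurons. -/
inductive IsLeakyNet (α : ℝ) (m dx : ℕ) :
    {k : ℕ} → ((Fin dx → ℝ) → (Fin k → ℝ)) → Prop
  | affine {k : ℕ} (A : Matrix (Fin k) (Fin dx) ℝ) (b : Fin k → ℝ) :
      IsLeakyNet α m dx (fun x => A.mulVec x + b)
  | step {k l : ℕ} (f : (Fin dx → ℝ) → (Fin k → ℝ)) (hf : IsLeakyNet α m dx f)
      (hk : k ≤ m) (A : Matrix (Fin l) (Fin k) ℝ) (b : Fin l → ℝ) :
      IsLeakyNet α m dx (fun x => A.mulVec (fun i => leakyReLU α (f x i)) + b)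

open Filter Bornology Metric Matrix

lemma leakyReLU_inv_leakyReLU {α : ℝ} (hα : 0 < α) (x : ℝ) :
    leakyReLU α⁻¹ (leakyReLU α x) = x := by
  unfold leakyReLU
  by_cases hx : 0 < x
  · simp [hx]
  · have hαx : ¬ 0 < α * x := not_lt.mpr (mul_nonpos_of_nonneg_of_nonpos hα.le (not_lt.mp hx))
    rw [if_neg hx, if_neg hαx, inv_mul_cancel_left₀ hα.ne']

lemma continuous_leakyReLU (α : ℝ) : Continuous (leakyReLU α) :=
  continuous_if (fun x (hx : x ∈ frontier (Set.Ioi 0)) => by simp_all)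
    continuous_id.continuousOn (continuous_const_mul α).continuousOn

noncomputable def leakyReLUHomeomorph {α : ℝ} (hα : 0 < α) : ℝ ≃ₜ ℝ where
  toFun := leakyReLU α
  invFun := leakyReLU α⁻¹
  left_inv := leakyReLU_inv_leakyReLU hα
  right_inv x := by simpa using leakyReLU_inv_leakyReLU (inv_pos.mpr hα) x
  continuous_toFun := continuous_leakyReLU α
  continuous_invFun := continuous_leakyReLU α⁻¹

lemma Homeomorph.exists_dist_symm_add_smul_eq {X F : Type*} [MetricSpace X] [ProperSpace X]
    [NormedAddCommGroup F] [NormedSpace ℝ F] [ProperSpace F] (ψ : X ≃ₜ F) {u : F} (hu : u ≠ 0)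
    (x : X) {r : ℝ} (hr : 0 ≤ r) : ∃ s ≥ (0 : ℝ), dist (ψ.symm (ψ x + s • u)) x = r := by
  have hray : Tendsto (fun s : ℝ => ψ x + s • u) atTop (cobounded F) := by
    refine (tendsto_const_add_cobounded _).comp (tendsto_norm_atTop_iff_cobounded.mp ?_)
    simpa only [norm_smul] using tendsto_norm_atTop_atTop.atTop_mul_const (norm_pos_iff.mpr hu)
  have hcurve : Tendsto (fun s : ℝ => ψ.symm (ψ x + s • u)) atTop (cobounded X) := by
    rw [cobounded_eq_cocompact] at hray ⊢
    exact Tendsto.comp (g := ψ.symm) ψ.symm.map_cocompact.le hray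
  exact intermediate_value_Ici (a := 0) (by fun_prop)
    ((tendsto_dist_right_cobounded_atTop x).comp hcurve) (show r ∈ Set.Ici _ by simpa using hr)

section

variable {n : ℕ}

def IsAffineAfterHomeomorph {k : ℕ} (F : (Fin n → ℝ) → Fin k → ℝ) : Prop :=
  ∃ (ψ : (Fin n → ℝ) ≃ₜ (Fin n → ℝ)) (A : Matrix (Fin k) (Fin n) ℝ) (b : Fin k → ℝ),
    ∀ x, F x = A *ᵥ ψ x + b

def IsLineInvariantAfterHomeomorph {β : Type*} (F : (Fin n → ℝ) → β) : Prop :=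
  ∃ (ψ : (Fin n → ℝ) ≃ₜ (Fin n → ℝ)) (u : Fin n → ℝ), u ≠ 0 ∧
    ∀ x (t : ℝ), F (ψ.symm (ψ x + t • u)) = F x

lemma IsLineInvariantAfterHomeomorph.comp {β γ : Type*} {F : (Fin n → ℝ) → β}
    (hF : IsLineInvariantAfterHomeomorph F) (g : β → γ) :
    IsLineInvariantAfterHomeomorph (g ∘ F) := by
  obtain ⟨ψ, u, hu, hψu⟩ := hF
  exact ⟨ψ, u, hu, fun x t => congrArg g (hψu x t)⟩

lemma isLineInvariantAfterHomeomorph_of_not_injective {k : ℕ} {F : (Fin n → ℝ) → Fin k → ℝ}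
    {ψ : (Fin n → ℝ) ≃ₜ (Fin n → ℝ)} {A : Matrix (Fin k) (Fin n) ℝ} {b : Fin k → ℝ}
    (hF : ∀ x, F x = A *ᵥ ψ x + b) (hA : ¬ Function.Injective A.mulVecLin) :
    IsLineInvariantAfterHomeomorph F := by
  rw [← LinearMap.ker_eq_bot] at hA
  obtain ⟨u, hAu, hu⟩ := Submodule.exists_mem_ne_zero_of_ne_bot hA
  refine ⟨ψ, u, hu, fun x t => ?_⟩
  rw [hF, hF, Homeomorph.apply_symm_apply, mulVec_add, mulVec_smul,
    show A *ᵥ u = 0 from hAu, smul_zero, add_zero]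

lemma IsAffineAfterHomeomorph.leakyReLU_layer {α : ℝ} (hα : 0 < α) {k l : ℕ} (hkn : k ≤ n)
    {f : (Fin n → ℝ) → Fin k → ℝ} (hf : IsAffineAfterHomeomorph f)
    (A : Matrix (Fin l) (Fin k) ℝ) (b : Fin l → ℝ) :
    IsAffineAfterHomeomorph (fun x => A *ᵥ (fun i => leakyReLU α (f x i)) + b) ∨
      IsLineInvariantAfterHomeomorph (fun x => A *ᵥ (fun i => leakyReLU α (f x i)) + b) := by
  obtain ⟨ψ, A₀, b₀, hf⟩ := hf
  by_cases hA₀ : Function.Injective A₀.mulVecLin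
  · have hnk : n ≤ k := by simpa using LinearMap.finrank_le_finrank_of_injective hA₀
    obtain rfl : k = n := le_antisymm hkn hnk
    let e : (Fin k → ℝ) ≃L[ℝ] (Fin k → ℝ) := LinearEquiv.toContinuousLinearEquiv <|
      LinearEquiv.ofBijective _ ⟨hA₀, LinearMap.injective_iff_surjective.mp hA₀⟩
    let σ : (Fin k → ℝ) ≃ₜ (Fin k → ℝ) :=
      Homeomorph.piCongrRight fun _ => leakyReLUHomeomorph hα
    refine Or.inl ⟨ψ.trans (e.toHomeomorph.trans ((Homeomorph.addRight b₀).trans σ)), A, b,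
      fun x => ?_⟩
    simp only [hf]
    rfl
  · exact Or.inr ((isLineInvariantAfterHomeomorph_of_not_injective hf hA₀).comp
      fun y => A *ᵥ (fun i => leakyReLU α (y i)) + b)

lemma IsLeakyNet.isAffineAfterHomeomorph_or_isLineInvariantAfterHomeomorph {α : ℝ} (hα : 0 < α)
    {m k : ℕ} (hmn : m ≤ n) {F : (Fin n → ℝ) → Fin k → ℝ} (hF : IsLeakyNet α m n F) :
    IsAffineAfterHomeomorph F ∨ IsLineInvariantAfterHomeomorph F := by
  induction hF with
  | affine A b => exact Or.inl ⟨Homeomorph.refl _, A, b, fun x => rfl⟩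
  | step f _ hk A b ih =>
    rcases ih with hf | hf
    · exact hf.leakyReLU_layer hα (hk.trans hmn) A b
    · exact Or.inr (hf.comp fun y => A *ᵥ (fun i => leakyReLU α (y i)) + b)

lemma IsLineInvariantAfterHomeomorph.exists_dist_eq {β : Type*} {F : (Fin n → ℝ) → β}
    (hF : IsLineInvariantAfterHomeomorph F) (x : Fin n → ℝ) {r : ℝ} (hr : 0 ≤ r) :
    ∃ y, dist y x = r ∧ F y = F x := by
  obtain ⟨ψ, u, hu, hψu⟩ := hF
  obtain ⟨s, -, hs⟩ := ψ.exists_dist_symm_add_smul_eq hu x hr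
  exact ⟨_, hs, hψu x s⟩

lemma exists_ne_zero_dotProduct_nonneg {ι : Type*} [Fintype ι] [Nonempty ι] (a : ι → ℝ) :
    ∃ u ≠ 0, 0 ≤ a ⬝ᵥ u := by
  by_cases ha : a = 0
  · obtain ⟨u, hu⟩ := exists_ne (0 : ι → ℝ)
    exact ⟨u, hu, by simp [ha]⟩
  · exact ⟨a, ha, Finset.sum_nonneg fun i _ => mul_self_nonneg (a i)⟩

lemma IsAffineAfterHomeomorph.exists_dist_eq_le [NeZero n] {k : ℕ} {F : (Fin n → ℝ) → Fin k → ℝ}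
    (hF : IsAffineAfterHomeomorph F) (x : Fin n → ℝ) {r : ℝ} (hr : 0 ≤ r) (j : Fin k) :
    ∃ y, dist y x = r ∧ F x j ≤ F y j := by
  obtain ⟨ψ, A, b, hF⟩ := hF
  obtain ⟨u, hu, hAu⟩ := exists_ne_zero_dotProduct_nonneg (A j)
  obtain ⟨s, hs, hsr⟩ := ψ.exists_dist_symm_add_smul_eq hu x hr
  refine ⟨_, hsr, ?_⟩
  have hFj : F (ψ.symm (ψ x + s • u)) j = F x j + s * (A j ⬝ᵥ u) := by
    simp only [hF, Homeomorph.apply_symm_apply, mulVec_add, mulVec_smul,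
      Pi.add_apply, Pi.smul_apply, smul_eq_mul, add_right_comm]
    rfl
  rw [hFj]
  exact le_add_of_nonneg_right (mul_nonneg hs hAu)

lemma IsLeakyNet.exists_dist_eq_le [NeZero n] {α : ℝ} (hα : 0 < α) {m k : ℕ} (hmn : m ≤ n)
    {F : (Fin n → ℝ) → Fin k → ℝ} (hF : IsLeakyNet α m n F) (x : Fin n → ℝ) {r : ℝ} (hr : 0 ≤ r)
    (j : Fin k) : ∃ y, dist y x = r ∧ F x j ≤ F y j := by
  rcases hF.isAffineAfterHomeomorph_or_isLineInvariantAfterHomeomorph hα hmn with hF | hF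
  · exact hF.exists_dist_eq_le x hr j
  · obtain ⟨y, hy, hFy⟩ := hF.exists_dist_eq x hr
    exact ⟨y, hy, (congrFun hFy j).ge⟩

end

theorem leaky_relu_min_width_necessity_general
    (dx dy : ℕ) (hdx : 1 ≤ dx) (hdy : 1 ≤ dy)
    (α : ℝ) (hα : α ∈ Set.Ioi (0 : ℝ) \ {1})
    (K : Set (Fin dx → ℝ)) (hKint : (interior K).Nonempty)
    (m : ℕ) (hm : m ≤ dx) :
    ¬ ∀ g : (Fin dx → ℝ) → (Fin dy → ℝ), ContinuousOn g K →
        ∀ ε : ℝ, 0 < ε →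
          ∃ F : (Fin dx → ℝ) → (Fin dy → ℝ),
            IsLeakyNet α m dx F ∧ ∀ x ∈ K, ‖F x - g x‖ < ε := by
  intro hdense
  obtain ⟨x₀, hx₀⟩ := hKint
  obtain ⟨r, hr, hball⟩ : ∃ r > 0, closedBall x₀ r ⊆ K :=
    nhds_basis_closedBall.mem_iff.mp (mem_interior_iff_mem_nhds.mp hx₀)
  obtain ⟨F, hF, hFg⟩ := hdense (fun x _ => -dist x x₀) (by fun_prop) (r / 2) (by positivity)
  have : NeZero dx := NeZero.of_pos hdx
  let j : Fin dy := ⟨0, hdy⟩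
  obtain ⟨y, hy, hFy⟩ := hF.exists_dist_eq_le hα.1 hm x₀ hr.le j
  have hx₀j := (norm_le_pi_norm _ j).trans_lt (hFg x₀ (hball (mem_closedBall_self hr.le)))
  have hyj := (norm_le_pi_norm _ j).trans_lt (hFg y (hball (mem_closedBall.mpr hy.le)))
  simp only [Pi.sub_apply, Real.norm_eq_abs, abs_lt, dist_self, hy] at hx₀j hyj
  linarith

/-- necessity of width `d_x + 1`: if `m ≤ d_x`, width-`m`
Leaky-ReLU networks are not dense in `C(K; ℝ^{d_y})` for the uniform norm. -/
theorem leaky_relu_min_width_necessity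
    (dx dy : ℕ) (hdx : 1 ≤ dx) (hdy : 1 ≤ dy)
    (α : ℝ) (hα : α ∈ Set.Ioi (0 : ℝ) \ {1})
    (K : Set (Fin dx → ℝ)) (hK : IsCompact K) (hKint : (interior K).Nonempty)
    (m : ℕ) (hm : m ≤ dx) :
    ¬ ∀ g : (Fin dx → ℝ) → (Fin dy → ℝ), ContinuousOn g K →
        ∀ ε : ℝ, 0 < ε →
          ∃ F : (Fin dx → ℝ) → (Fin dy → ℝ),
            IsLeakyNet α m dx F ∧ ∀ x ∈ K, ‖F x - g x‖ < ε :=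
  leaky_relu_min_width_necessity_general dx dy hdx hdy α hα K hKint m hm
end
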